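/- arXiv:2211.07829 — 5 statements merged into one kernel-verified Lean document; each statement's English description precedes it below -/
import Mathlib

section
/- Let (E, 𝓘) be a finite set system where 𝓘 ⊆ 2^E is downward closed, with rank r = max{|S| : S ∈ 𝓘}, let w : E → ℝ≥0 be nonnegative weights and p ∈ (0,1]. For every subset S ⊆ E fix OPTSOL(S) ∈ 𝓘 with OPTSOL(S) ⊆ S maximizing w(OPTSOL(S)) = Σ_{e∈OPTSOL(S)} w_e, and set q_e = Pr[e ∈ OPTSOL(R)] (so q_e ≤ p for all e, and q ∈ P_𝓘). Suppose P_𝓘 admits a c-balanced contention resolution scheme. Let Q be a random subset of E, independent of R, containing each element e independently with probability q_e/p. Then E[|Q|] ≤ r/p, and E[ max{ w(T) : T ⊆ Q ∩ R, T ∈ 𝓘 } ] ≥ c · E[ w(OPTSOL(R)) ]. -/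
open Finset

noncomputable section

variable {E : Type*} [Fintype E] [DecidableEq E]

/-- Probability that an independent-inclusion random subset of `E`, in which each element `e`
is included independently with probability `π e`, is exactly the set `A`. -/
def prodWeight (π : E → ℝ) (A : Finset E) : ℝ :=
  (∏ e ∈ A, π e) * ∏ e ∈ Aᶜ, (1 - π e)

/-- Expectation of `g` under the independent-inclusion random subset with marginals `π`. -/
def expec (π : E → ℝ) (g : Finset E → ℝ) : ℝ :=
  ∑ A : Finset E, prodWeight π A * g A

/-- Total (additive) weight of a finite set. -/
def setWeight (w : E → ℝ) (T : Finset E) : ℝ := ∑ e ∈ T, w e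

/-- Value of a best feasible (w.r.t. `𝓘`) subset of `S`, for the objective `f`. -/
def bestVal (𝓘 : Set (Finset E)) (f : Finset E → ℝ) (S : Finset E) : ℝ :=
  sSup (f '' {T | T ⊆ S ∧ T ∈ 𝓘})

/-- The polytope `P_𝓘`: the convex hull of indicator vectors of feasible sets. -/
def systemPolytope (𝓘 : Set (Finset E)) : Set (E → ℝ) :=
  convexHull ℝ ((fun (I : Finset E) (e : E) => if e ∈ I then (1 : ℝ) else 0) '' 𝓘)

/-- A contention resolution scheme for the set system `𝓘`: `out x A B` is the probability
that on input marginals `x` and active set `A` the scheme outputs the set `B`. -/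
structure CRS (E : Type*) [Fintype E] [DecidableEq E] (𝓘 : Set (Finset E)) where
  out : (E → ℝ) → Finset E → Finset E → ℝ
  nonneg : ∀ x A B, 0 ≤ out x A B
  sum_one : ∀ x A, ∑ B : Finset E, out x A B = 1
  subset_of : ∀ x A B, out x A B ≠ 0 → B ⊆ A
  indep_of : ∀ x A B, out x A B ≠ 0 → B ∈ 𝓘

/-- `π.selProb x A e` is the probability that `e` belongs to the output of the scheme `π`
on input `(x, A)`. -/
def CRS.selProb {𝓘 : Set (Finset E)} (π : CRS E 𝓘) (x : E → ℝ) (A : Finset E) (e : E) : ℝ :=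
  ∑ B : Finset E, if e ∈ B then π.out x A B else 0

/-- `π` is `c`-balanced: for every `x ∈ P_𝓘` and every element `e` with `x e > 0`,
`Pr[e ∈ π_x(R(x))] ≥ c · x e`, i.e. `Pr[e ∈ π_x(R(x)) ∣ e ∈ R(x)] ≥ c`. -/
def CRS.Balanced {𝓘 : Set (Finset E)} (π : CRS E 𝓘) (c : ℝ) : Prop :=
  ∀ x ∈ systemPolytope 𝓘, ∀ e : E, 0 < x e →
    c * x e ≤ expec x fun A => π.selProb x A e

/-- `π` is a monotone scheme: `Pr[e ∈ π_x(A₁)] ≥ Pr[e ∈ π_x(A₂)]` whenever `e ∈ A₁ ⊆ A₂`. -/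
def CRS.MonotoneScheme {𝓘 : Set (Finset E)} (π : CRS E 𝓘) : Prop :=
  ∀ x : E → ℝ, ∀ A₁ A₂ : Finset E, A₁ ⊆ A₂ → ∀ e ∈ A₁,
    π.selProb x A₂ e ≤ π.selProb x A₁ e

/-! The marginal vector `q` of `OPTSOL(R)` is a convex combination of indicator vectors of
feasible sets, so `q ∈ P_𝓘`, and `∑ q_e = E[|OPTSOL(R)|] ≤ r`; as `Pr[e ∈ Q] = q_e / p` this is the
size bound. For the weight bound, `Q ∩ R` is exactly the random set `R(q)`. Running the
`c`-balanced scheme on it keeps every `e` with probability at least `c q_e` and outputs a feasible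
subset of `Q ∩ R`, so `E[best(Q ∩ R)] ≥ ∑ w_e c q_e = c E[w(OPTSOL(R))]`. -/

lemma sum_prod_decide_mem (f : E → Bool → ℝ) :
    ∑ A : Finset E, ∏ e, f e (decide (e ∈ A)) = ∏ e, (f e true + f e false) := by
  rw [Fintype.prod_add]
  refine Finset.sum_congr rfl fun A _ => ?_
  rw [← Finset.prod_mul_prod_compl A]
  congr 1 <;> refine Finset.prod_congr rfl fun e he => ?_ <;> simp_all

lemma prodWeight_eq_prod (π : E → ℝ) (A : Finset E) :
    prodWeight π A = ∏ e, (if e ∈ A then π e else 1 - π e) := by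
  rw [← Finset.prod_mul_prod_compl A, prodWeight]
  congr 1 <;> refine Finset.prod_congr rfl fun e he => ?_ <;> simp_all

lemma sum_prodWeight (π : E → ℝ) : ∑ A : Finset E, prodWeight π A = 1 := by
  simp [prodWeight, ← Fintype.prod_add]

lemma sum_sum_ite_inter_eq_prodWeight (π₁ π₂ : E → ℝ) (S : Finset E) :
    ∑ Q : Finset E, ∑ A : Finset E,
      (if Q ∩ A = S then prodWeight π₁ Q * prodWeight π₂ A else 0) =
      prodWeight (fun e => π₁ e * π₂ e) S := by
  -- both the weights and the event `Q ∩ A = S` factor over the coordinates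
  let g : E → Bool → Bool → ℝ := fun e x y =>
    ((if x then π₁ e else 1 - π₁ e) * if y then π₂ e else 1 - π₂ e) *
      if (x && y) = decide (e ∈ S) then 1 else 0
  have hg : ∀ Q A : Finset E, (if Q ∩ A = S then prodWeight π₁ Q * prodWeight π₂ A else 0) =
      ∏ e, g e (decide (e ∈ Q)) (decide (e ∈ A)) := by
    intro Q A
    simp only [g]
    rw [Finset.prod_mul_distrib, Finset.prod_mul_distrib, Finset.prod_boole]
    simp only [decide_eq_true_eq, ← prodWeight_eq_prod, mul_ite, mul_one, mul_zero]
    refine if_congr ?_ rfl rfl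
    simp [Finset.ext_iff, ← Bool.decide_and]
  simp only [hg, sum_prod_decide_mem]
  rw [sum_prod_decide_mem (fun e x => g e x true + g e x false), prodWeight_eq_prod]
  refine Finset.prod_congr rfl fun e _ => ?_
  by_cases he : e ∈ S
  · simp [g, he]
  · simp [g, he]
    ring

lemma expec_inter (π₁ π₂ : E → ℝ) (g : Finset E → ℝ) :
    expec π₁ (fun Q => expec π₂ (fun A => g (Q ∩ A))) = expec (fun e => π₁ e * π₂ e) g := by
  simp only [expec, ← sum_sum_ite_inter_eq_prodWeight, Finset.sum_mul, Finset.mul_sum]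
  symm
  rw [Finset.sum_comm]
  refine Finset.sum_congr rfl fun Q _ => ?_
  rw [Finset.sum_comm]
  refine Finset.sum_congr rfl fun A _ => ?_
  simp [ite_mul, mul_assoc]

lemma expec_sum {ι : Type*} (π : E → ℝ) (s : Finset ι) (g : ι → Finset E → ℝ) :
    expec π (fun A => ∑ i ∈ s, g i A) = ∑ i ∈ s, expec π (g i) := by
  simp only [expec, Finset.mul_sum]
  exact Finset.sum_comm

lemma expec_const_mul (π : E → ℝ) (a : ℝ) (g : Finset E → ℝ) :
    expec π (fun A => a * g A) = a * expec π g := by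
  simp only [expec, Finset.mul_sum]
  exact Finset.sum_congr rfl fun A _ => by ring

lemma expec_const (π : E → ℝ) (a : ℝ) : expec π (fun _ => a) = a := by
  simp [expec, ← Finset.sum_mul, sum_prodWeight]

lemma expec_prod (π : E → ℝ) (f : E → Bool → ℝ) :
    expec π (fun A => ∏ e, f e (decide (e ∈ A))) =
      ∏ e, (π e * f e true + (1 - π e) * f e false) := by
  simpa [expec, prodWeight_eq_prod, ← Finset.prod_mul_distrib] using
    sum_prod_decide_mem (fun e b => (if b then π e else 1 - π e) * f e b)

lemma expec_ite_mem (π : E → ℝ) (e : E) : expec π (fun A => if e ∈ A then 1 else 0) = π e := by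
  simpa [add_ite, Finset.prod_ite_eq'] using
    expec_prod π (fun e' b => if e' = e then (if b then 1 else 0) else 1)

lemma setWeight_eq_sum_mul_ite (w : E → ℝ) (T : Finset E) :
    setWeight w T = ∑ e, w e * if e ∈ T then 1 else 0 := by
  simp [setWeight, Finset.sum_ite_mem]

lemma expec_setWeight_comp (π w : E → ℝ) (F : Finset E → Finset E) :
    expec π (fun A => setWeight w (F A)) =
      ∑ e, w e * expec π (fun A => if e ∈ F A then 1 else 0) := by
  simp only [setWeight_eq_sum_mul_ite, expec_sum, expec_const_mul]

lemma expec_card_comp (π : E → ℝ) (F : Finset E → Finset E) :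
    expec π (fun A => ((F A).card : ℝ)) = ∑ e, expec π (fun A => if e ∈ F A then 1 else 0) := by
  simpa [setWeight] using expec_setWeight_comp π 1 F

lemma expec_card (π : E → ℝ) : expec π (fun A => (A.card : ℝ)) = ∑ e, π e := by
  simpa [expec_ite_mem] using expec_card_comp π id

section Nonneg

variable {π : E → ℝ} (h0 : ∀ e, 0 ≤ π e) (h1 : ∀ e, π e ≤ 1)
include h0 h1

lemma prodWeight_nonneg (A : Finset E) : 0 ≤ prodWeight π A :=
  mul_nonneg (Finset.prod_nonneg fun e _ => h0 e)
    (Finset.prod_nonneg fun e _ => sub_nonneg.2 (h1 e))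

lemma expec_mono {g g' : Finset E → ℝ} (h : ∀ A, g A ≤ g' A) : expec π g ≤ expec π g' :=
  Finset.sum_le_sum fun A _ => mul_le_mul_of_nonneg_left (h A) (prodWeight_nonneg h0 h1 A)

lemma expec_nonneg {g : Finset E → ℝ} (hg : ∀ A, 0 ≤ g A) : 0 ≤ expec π g := by
  simpa [expec_const] using expec_mono h0 h1 hg

lemma expec_le {g : Finset E → ℝ} {a : ℝ} (hg : ∀ A, g A ≤ a) : expec π g ≤ a := by
  simpa [expec_const] using expec_mono h0 h1 hg

lemma marginal_mem_systemPolytope {𝓘 : Set (Finset E)} {F : Finset E → Finset E}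
    (hF : ∀ A, F A ∈ 𝓘) :
    (fun e => expec π (fun A => if e ∈ F A then 1 else 0)) ∈ systemPolytope 𝓘 := by
  have h : (fun e => expec π (fun A => if e ∈ F A then 1 else 0)) =
      Finset.univ.centerMass (prodWeight π) (fun A e => if e ∈ F A then (1 : ℝ) else 0) := by
    ext e
    simp [Finset.centerMass, sum_prodWeight, expec]
  rw [h]
  exact Finset.centerMass_mem_convexHull _ (fun A _ => prodWeight_nonneg h0 h1 A)
    (by simp [sum_prodWeight]) fun A _ => ⟨F A, hF A, rfl⟩

end Nonneg

lemma le_bestVal {α : Type*} {𝓘 : Set (Finset α)} (f : Finset α → ℝ) {S T : Finset α}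
    (hTS : T ⊆ S) (hT : T ∈ 𝓘) : f T ≤ bestVal 𝓘 f S :=
  le_csSup ((S.powerset.finite_toSet.subset fun _ hU => Finset.mem_powerset.2 hU.1).image f).bddAbove
    ⟨T, ⟨hTS, hT⟩, rfl⟩

namespace CRS

variable {𝓘 : Set (Finset E)} (π : CRS E 𝓘)

lemma selProb_nonneg (x : E → ℝ) (A : Finset E) (e : E) : 0 ≤ π.selProb x A e :=
  Finset.sum_nonneg fun B _ => by split_ifs <;> simp [π.nonneg]

lemma sum_mul_selProb (w x : E → ℝ) (A : Finset E) :
    ∑ e, w e * π.selProb x A e = ∑ B, π.out x A B * setWeight w B := by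
  simp only [selProb, setWeight_eq_sum_mul_ite, Finset.mul_sum]
  rw [Finset.sum_comm]
  refine Finset.sum_congr rfl fun B _ => Finset.sum_congr rfl fun e _ => ?_
  split_ifs <;> ring

lemma sum_mul_selProb_le_bestVal (w x : E → ℝ) (A : Finset E) :
    ∑ e, w e * π.selProb x A e ≤ bestVal 𝓘 (setWeight w) A := by
  rw [sum_mul_selProb]
  calc ∑ B, π.out x A B * setWeight w B ≤ ∑ B, π.out x A B * bestVal 𝓘 (setWeight w) A := by
        refine Finset.sum_le_sum fun B _ => ?_
        by_cases hB : π.out x A B = 0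
        · simp [hB]
        · exact mul_le_mul_of_nonneg_left
            (le_bestVal _ (π.subset_of x A B hB) (π.indep_of x A B hB)) (π.nonneg x A B)
    _ = bestVal 𝓘 (setWeight w) A := by rw [← Finset.sum_mul, π.sum_one, one_mul]

variable {π} {c : ℝ} {x : E → ℝ}

lemma Balanced.mul_le_expec_selProb (hbal : π.Balanced c) (hx : x ∈ systemPolytope 𝓘)
    (h0 : ∀ e, 0 ≤ x e) (h1 : ∀ e, x e ≤ 1) (e : E) :
    c * x e ≤ expec x (fun A => π.selProb x A e) := by
  rcases (h0 e).lt_or_eq with hpos | hzero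
  · exact hbal x hx e hpos
  · rw [← hzero, mul_zero]
    exact expec_nonneg h0 h1 fun A => π.selProb_nonneg x A e

lemma Balanced.mul_sum_le_expec_bestVal (hbal : π.Balanced c) (hx : x ∈ systemPolytope 𝓘)
    (h0 : ∀ e, 0 ≤ x e) (h1 : ∀ e, x e ≤ 1) {w : E → ℝ} (hw : ∀ e, 0 ≤ w e) :
    c * ∑ e, w e * x e ≤ expec x (bestVal 𝓘 (setWeight w)) :=
  calc c * ∑ e, w e * x e = ∑ e, w e * (c * x e) := by
        rw [Finset.mul_sum]; exact Finset.sum_congr rfl fun e _ => by ring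
    _ ≤ ∑ e, w e * expec x (fun A => π.selProb x A e) :=
        Finset.sum_le_sum fun e _ =>
          mul_le_mul_of_nonneg_left (hbal.mul_le_expec_selProb hx h0 h1 e) (hw e)
    _ = expec x (fun A => ∑ e, w e * π.selProb x A e) := by
        simp only [expec_sum, expec_const_mul]
    _ ≤ expec x (bestVal 𝓘 (setWeight w)) :=
        expec_mono h0 h1 fun A => π.sum_mul_selProb_le_bestVal w x A

end CRS

theorem stmt_0_general
    (𝓘 : Set (Finset E))
    (r : ℕ) (hr : IsGreatest {n : ℕ | ∃ S ∈ 𝓘, S.card = n} r)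
    (w : E → ℝ) (hw : ∀ e, 0 ≤ w e)
    (p : ℝ) (hp0 : 0 < p) (hp1 : p ≤ 1)
    (OPTSOL : Finset E → Finset E)
    (hOmem : ∀ S, OPTSOL S ∈ 𝓘)
    (q : E → ℝ)
    (hq : ∀ e, q e = expec (fun _ => p) (fun A => if e ∈ OPTSOL A then 1 else 0))
    (c : ℝ) (π : CRS E 𝓘) (hbal : π.Balanced c) :
    expec (fun e => q e / p) (fun Q => (Q.card : ℝ)) ≤ (r : ℝ) / p ∧
      c * expec (fun _ => p) (fun A => setWeight w (OPTSOL A)) ≤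
        expec (fun e => q e / p) (fun Q =>
          expec (fun _ => p) (fun A => bestVal 𝓘 (setWeight w) (Q ∩ A))) := by
  have hq_eq : q = fun e => expec (fun _ => p) (fun A => if e ∈ OPTSOL A then 1 else 0) :=
    funext hq
  have hp0' : ∀ _ : E, 0 ≤ p := fun _ => hp0.le
  have hp1' : ∀ _ : E, p ≤ 1 := fun _ => hp1
  have hq0 : ∀ e, 0 ≤ q e := fun e => hq e ▸ expec_nonneg hp0' hp1' fun A => by split_ifs <;> simp
  have hq1 : ∀ e, q e ≤ 1 := fun e => hq e ▸ expec_le hp0' hp1' fun A => by split_ifs <;> simp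
  constructor
  · have hsum : ∑ e, q e ≤ r := by
      rw [hq_eq, ← expec_card_comp]
      exact expec_le hp0' hp1' fun A => by exact_mod_cast hr.2 ⟨OPTSOL A, hOmem A, rfl⟩
    rw [expec_card, ← Finset.sum_div]
    gcongr
  · have hqP : q ∈ systemPolytope 𝓘 := hq_eq ▸ marginal_mem_systemPolytope hp0' hp1' hOmem
    calc c * expec (fun _ => p) (fun A => setWeight w (OPTSOL A)) = c * ∑ e, w e * q e := by
          rw [expec_setWeight_comp, hq_eq]
      _ ≤ expec q (bestVal 𝓘 (setWeight w)) := hbal.mul_sum_le_expec_bestVal hqP hq0 hq1 hw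
      _ = _ := by
          rw [expec_inter]
          congr 1
          ext e
          rw [div_mul_cancel₀ _ hp0.ne']

/-- The generic contention-resolution-based sparsifier for additive
objectives: if `P_𝓘` admits a `c`-balanced CRS, then the random set `Q` including each
element independently with probability `q_e / p` has expected size at most `r/p`
(degree `1/p`), and the expected optimum of the sparsified instance is at least
`c` times the stochastic optimum. -/
theorem stmt_0
    (𝓘 : Set (Finset E))
    (hdown : ∀ S ∈ 𝓘, ∀ T ⊆ S, T ∈ 𝓘)
    (r : ℕ) (hr : IsGreatest {n : ℕ | ∃ S ∈ 𝓘, S.card = n} r)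
    (w : E → ℝ) (hw : ∀ e, 0 ≤ w e)
    (p : ℝ) (hp0 : 0 < p) (hp1 : p ≤ 1)
    (OPTSOL : Finset E → Finset E)
    (hOmem : ∀ S, OPTSOL S ∈ 𝓘)
    (hOsub : ∀ S, OPTSOL S ⊆ S)
    (hOmax : ∀ S, ∀ T ⊆ S, T ∈ 𝓘 → setWeight w T ≤ setWeight w (OPTSOL S))
    (q : E → ℝ)
    (hq : ∀ e, q e = expec (fun _ => p) (fun A => if e ∈ OPTSOL A then 1 else 0))
    (c : ℝ) (π : CRS E 𝓘) (hbal : π.Balanced c) :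
    expec (fun e => q e / p) (fun Q => (Q.card : ℝ)) ≤ (r : ℝ) / p ∧
      c * expec (fun _ => p) (fun A => setWeight w (OPTSOL A)) ≤
        expec (fun e => q e / p) (fun Q =>
          expec (fun _ => p) (fun A => bestVal 𝓘 (setWeight w) (Q ∩ A))) :=
  stmt_0_general 𝓘 r hr w hw p hp0 hp1 OPTSOL hOmem q hq c π hbal
end
end

section
/- Fix a positive integer n, set E = {1,…,n} and p = 1/√n, and let R be a random subset of E containing each element independently with probability p. For any random subset Q of E (independent of R) with E[|Q|] ≤ √n, the expected value of the rank-one unweighted optimum over Q ∩ R satisfies E[ max{ |T| : T ⊆ Q ∩ R, |T| ≤ 1 } ] = 1 − E[(1 − 1/√n)^{|Q|}] ≤ 1 − (1 − 1/√n)^{√n}, whereas the stochastic optimum is E[ max{ |T| : T ⊆ R, |T| ≤ 1 } ] = 1 − (1 − 1/√n)^{n}. -/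
open Finset

noncomputable section

variable {E : Type*} [Fintype E] [DecidableEq E]

set_option linter.unusedSectionVars false in
lemma bestVal_rank_one (S : Finset E) :
    bestVal {T : Finset E | T.card ≤ 1} (fun T => (T.card : ℝ)) S
      = if S = ∅ then 0 else 1 := by
  unfold bestVal
  split_ifs with h
  · subst h
    have : {T : Finset E | T ⊆ ∅ ∧ T ∈ {T : Finset E | T.card ≤ 1}} = {∅} := by
      ext T
      simp only [Set.mem_setOf_eq, Finset.subset_empty, Set.mem_singleton_iff]
      exact ⟨fun h => h.1, fun h => ⟨h, by simp [h]⟩⟩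
    rw [this]
    simp
  · obtain ⟨e, he⟩ := Finset.nonempty_iff_ne_empty.2 h
    have h1 : (1 : ℝ) ∈ (fun T => (T.card : ℝ)) '' {T | T ⊆ S ∧ T ∈ {T : Finset E | T.card ≤ 1}} :=
      ⟨{e}, ⟨Finset.singleton_subset_iff.2 he, by simp⟩, by simp⟩
    have hub : ∀ x ∈ (fun T => (T.card : ℝ)) '' {T | T ⊆ S ∧ T ∈ {T : Finset E | T.card ≤ 1}},
        x ≤ 1 := by
      rintro x ⟨T, ⟨-, hT⟩, rfl⟩
      simp only [Set.mem_setOf_eq] at hT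
      calc ((T.card : ℝ)) ≤ ((1:ℕ) : ℝ) := Nat.cast_le.2 hT
        _ = 1 := Nat.cast_one
    exact le_antisymm (csSup_le ⟨1, h1⟩ hub) (le_csSup ⟨1, hub⟩ h1)

lemma sum_prodWeight_inter_empty (π : E → ℝ) (Q : Finset E) :
    ∑ A : Finset E, prodWeight π A * (if Q ∩ A = ∅ then 1 else 0)
      = ∏ e ∈ Q, (1 - π e) := by
  have hfilt : (Finset.univ.filter (fun A : Finset E => Q ∩ A = ∅)) = Qᶜ.powerset := by
    ext A
    simp only [Finset.mem_filter, Finset.mem_univ, true_and, Finset.mem_powerset]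
    constructor
    · intro hA x hx
      simp only [Finset.mem_compl]
      intro hxQ
      have : x ∈ Q ∩ A := Finset.mem_inter.2 ⟨hxQ, hx⟩
      simp [hA] at this
    · intro hA
      ext x
      simp only [Finset.mem_inter, Finset.notMem_empty, iff_false, not_and]
      intro hxQ hxA
      have := hA hxA
      simp [hxQ] at this
  calc ∑ A : Finset E, prodWeight π A * (if Q ∩ A = ∅ then 1 else 0)
      = ∑ A ∈ Qᶜ.powerset, prodWeight π A := by
        rw [← hfilt]
        rw [Finset.sum_filter]
        apply Finset.sum_congr rfl
        intro A _
        split_ifs <;> ring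
    _ = ∑ A ∈ Qᶜ.powerset,
          (∏ e ∈ Q, (1 - π e)) * ((∏ e ∈ A, π e) * ∏ e ∈ Qᶜ \ A, (1 - π e)) := by
        apply Finset.sum_congr rfl
        intro A hA
        rw [Finset.mem_powerset] at hA
        have hQA : Q ⊆ Aᶜ := by
          intro x hx
          simp only [Finset.mem_compl]
          intro hxA
          have := hA hxA
          simp [hx] at this
        have hsd : Aᶜ \ Q = Qᶜ \ A := by
          ext x; simp only [Finset.mem_sdiff, Finset.mem_compl]; tauto
        have := Finset.prod_sdiff (f := fun e => 1 - π e) hQA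
        unfold prodWeight
        rw [← this, hsd]
        ring
    _ = (∏ e ∈ Q, (1 - π e)) * ∑ A ∈ Qᶜ.powerset,
          (∏ e ∈ A, π e) * ∏ e ∈ Qᶜ \ A, (1 - π e) := by
        rw [Finset.mul_sum]
    _ = ∏ e ∈ Q, (1 - π e) := by
        rw [← Finset.prod_add]
        simp

lemma expec_rank_one (π : E → ℝ) (Q : Finset E) :
    expec π (fun A => bestVal {T : Finset E | T.card ≤ 1} (fun T => (T.card : ℝ)) (Q ∩ A))
      = 1 - ∏ e ∈ Q, (1 - π e) := by
  unfold expec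
  have : ∀ A : Finset E,
      prodWeight π A * bestVal {T : Finset E | T.card ≤ 1} (fun T => (T.card : ℝ)) (Q ∩ A)
        = prodWeight π A - prodWeight π A * (if Q ∩ A = ∅ then 1 else 0) := by
    intro A
    rw [bestVal_rank_one]
    split_ifs <;> ring
  rw [Finset.sum_congr rfl (fun A _ => this A), Finset.sum_sub_distrib,
    sum_prodWeight, sum_prodWeight_inter_empty]

lemma jensen_pow {ι : Type*} [Fintype ι] (c : ℝ) (hc : 0 < c) (hc1 : c ≤ 1)
    (μ : ι → ℝ) (k : ι → ℕ) (hμ0 : ∀ i, 0 ≤ μ i) (hμ1 : ∑ i, μ i = 1)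
    (m : ℝ) (hm : ∑ i, μ i * (k i : ℝ) ≤ m) :
    c ^ m ≤ ∑ i, μ i * c ^ (k i) := by
  set g : ℝ → ℝ := fun x => Real.exp (Real.log c * x) with hg
  have hconv : ConvexOn ℝ Set.univ g := by
    have := (convexOn_exp).comp_affineMap
      ((LinearMap.lsmul ℝ ℝ (Real.log c)).toAffineMap)
    simpa [g, Function.comp_def] using this
  have hgk : ∀ i, g (k i) = c ^ (k i) := by
    intro i
    simp only [g]
    rw [mul_comm, Real.exp_nat_mul, Real.exp_log hc]
  have h1 : g (∑ i, μ i • ((k i : ℝ))) ≤ ∑ i, μ i • g (k i) :=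
    hconv.map_sum_le (fun i _ => hμ0 i) (by simpa using hμ1) (fun i _ => Set.mem_univ _)
  have h2 : c ^ m ≤ g (∑ i, μ i • ((k i : ℝ))) := by
    show c ^ m ≤ Real.exp (Real.log c * (∑ i, μ i • ((k i : ℝ))))
    rw [← Real.rpow_def_of_pos hc]
    apply Real.rpow_le_rpow_of_exponent_ge hc hc1
    simpa [smul_eq_mul] using hm
  calc c ^ m ≤ g (∑ i, μ i • ((k i : ℝ))) := h2
    _ ≤ ∑ i, μ i • g (k i) := h1
    _ = ∑ i, μ i * c ^ (k i) := by simp [smul_eq_mul, hgk]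

/-- For the rank-one matroid on `n` elements with `p = 1/√n`, any random
sparsifier `Q` (given by a distribution `μ` on subsets) with expected size at most `√n`
satisfies: the expected sparsified optimum equals `1 − E[(1 − 1/√n)^{|Q|}]`, which is at
most `1 − (1 − 1/√n)^{√n}`; whereas the stochastic optimum equals `1 − (1 − 1/√n)^n`. -/
theorem stmt_2 (n : ℕ) (hn : 0 < n)
    (μ : Finset (Fin n) → ℝ)
    (hμ0 : ∀ Q, 0 ≤ μ Q)
    (hμ1 : ∑ Q : Finset (Fin n), μ Q = 1)
    (hdeg : ∑ Q : Finset (Fin n), μ Q * (Q.card : ℝ) ≤ Real.sqrt n) :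
    (∑ Q : Finset (Fin n), μ Q *
        expec (fun _ => 1 / Real.sqrt n)
          (fun A => bestVal {T : Finset (Fin n) | T.card ≤ 1} (fun T => (T.card : ℝ)) (Q ∩ A))
      = 1 - ∑ Q : Finset (Fin n), μ Q * (1 - 1 / Real.sqrt n) ^ Q.card) ∧
    (∑ Q : Finset (Fin n), μ Q *
        expec (fun _ => 1 / Real.sqrt n)
          (fun A => bestVal {T : Finset (Fin n) | T.card ≤ 1} (fun T => (T.card : ℝ)) (Q ∩ A))
      ≤ 1 - (1 - 1 / Real.sqrt n) ^ (Real.sqrt n : ℝ)) ∧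
    (expec (fun _ => 1 / Real.sqrt n)
        (fun A => bestVal {T : Finset (Fin n) | T.card ≤ 1} (fun T => (T.card : ℝ)) A)
      = 1 - (1 - 1 / Real.sqrt n) ^ n) := by
  set c : ℝ := 1 - 1 / Real.sqrt n with hcdef
  have hsq1 : (1 : ℝ) ≤ Real.sqrt n := by
    have : (1 : ℝ) ≤ (n : ℝ) := by exact_mod_cast hn
    calc (1:ℝ) = Real.sqrt 1 := Real.sqrt_one.symm
      _ ≤ Real.sqrt n := Real.sqrt_le_sqrt this
  have hsqpos : (0:ℝ) < Real.sqrt n := lt_of_lt_of_le one_pos hsq1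
  have hc0 : 0 ≤ c := by
    have : 1 / Real.sqrt n ≤ 1 := by
      rw [div_le_one hsqpos]; exact hsq1
    simp only [hcdef]; linarith
  have hc1 : c ≤ 1 := by
    have : 0 ≤ 1 / Real.sqrt n := by positivity
    simp only [hcdef]; linarith
  have hE : ∀ Q : Finset (Fin n),
      expec (fun _ => 1 / Real.sqrt n)
        (fun A => bestVal {T : Finset (Fin n) | T.card ≤ 1} (fun T => (T.card : ℝ)) (Q ∩ A))
        = 1 - c ^ Q.card := by
    intro Q
    rw [expec_rank_one]
    rw [Finset.prod_const]
  have heq1 : ∑ Q : Finset (Fin n), μ Q *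
        expec (fun _ => 1 / Real.sqrt n)
          (fun A => bestVal {T : Finset (Fin n) | T.card ≤ 1} (fun T => (T.card : ℝ)) (Q ∩ A))
      = 1 - ∑ Q : Finset (Fin n), μ Q * c ^ Q.card := by
    have : ∀ Q : Finset (Fin n), μ Q *
        expec (fun _ => 1 / Real.sqrt n)
          (fun A => bestVal {T : Finset (Fin n) | T.card ≤ 1} (fun T => (T.card : ℝ)) (Q ∩ A))
        = μ Q - μ Q * c ^ Q.card := by
      intro Q; rw [hE Q]; ring
    rw [Finset.sum_congr rfl (fun Q _ => this Q), Finset.sum_sub_distrib, hμ1]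
  refine ⟨heq1, ?_, ?_⟩
  · rw [heq1]
    have hkey : c ^ (Real.sqrt n : ℝ) ≤ ∑ Q : Finset (Fin n), μ Q * c ^ Q.card := by
      rcases eq_or_lt_of_le hc0 with h0 | hcpos
      · have hs1 : Real.sqrt n = 1 := by
          have : 1 / Real.sqrt n = 1 := by simp only [hcdef] at h0; linarith
          field_simp at this
          linarith
        rw [← h0, hs1, Real.rpow_one]
        apply Finset.sum_nonneg
        intro Q _
        exact mul_nonneg (hμ0 Q) (pow_nonneg le_rfl _)
      · exact jensen_pow c hcpos hc1 μ (fun Q => Q.card) hμ0 hμ1 (Real.sqrt n) hdeg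
    linarith
  · have : (fun A : Finset (Fin n) =>
        bestVal {T : Finset (Fin n) | T.card ≤ 1} (fun T => (T.card : ℝ)) A)
        = (fun A => bestVal {T : Finset (Fin n) | T.card ≤ 1} (fun T => (T.card : ℝ))
            ((Finset.univ : Finset (Fin n)) ∩ A)) := by
      funext A; rw [Finset.univ_inter]
    rw [this, hE Finset.univ, Finset.card_univ, Fintype.card_fin]
end
end

section
/- Let M be a finite matroid on ground set E with nonnegative weights w : E → ℝ≥0, let p ∈ [0,1], and let τ be a positive integer. Suppose I_1, …, I_τ ⊆ E are sets such that for each t ∈ {1,…,τ}, I_t is a maximum-w-weight independent set of the deletion minor M \ (I_1 ∪ … ∪ I_{t−1}), and let Q = I_1 ∪ … ∪ I_τ. Then |Q| ≤ τ · Rank(M), and E[ max{ w(T) : T ⊆ Q ∩ R, T independent in M } ] ≥ (1 − (1−p)^τ) · E[ max{ w(T) : T ⊆ R, T independent in M } ]. In particular, taking τ = ⌈(1/p)·log(1/ε)⌉ gives an expected approximation factor of at least 1 − ε. -/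
open Finset

noncomputable section

variable {E : Type*} [Fintype E] [DecidableEq E]

/-- A (finite) matroid on the ground set `E`, given by its independent sets. -/
structure FinMatroid (E : Type*) [Fintype E] [DecidableEq E] where
  Indep : Finset E → Prop
  empty_indep : Indep ∅
  indep_subset : ∀ ⦃S T : Finset E⦄, Indep T → S ⊆ T → Indep S
  indep_exchange : ∀ ⦃S T : Finset E⦄, Indep S → Indep T → S.card < T.card →
    ∃ e ∈ T, e ∉ S ∧ Indep (insert e S)

/-- The rank function of a matroid: the maximum cardinality of an independent subset of `S`. -/
def FinMatroid.rank (M : FinMatroid E) (S : Finset E) : ℕ :=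
  sSup {n | ∃ T ⊆ S, M.Indep T ∧ T.card = n}

/-- `I_1 ∪ ⋯ ∪ I_j` (sets are indexed starting from `1`). -/
def prefixUnion (I : ℕ → Finset E) (j : ℕ) : Finset E :=
  (Finset.Icc 1 j).biUnion I

/-- A nested system of spanning sets for the set system on ground set `G` with rank
function `rk`: each `I_j` lies outside `I_{1:j-1}` and is spanning (full rank) in the
deletion minor obtained by removing `I_{1:j-1}` from `G`. -/
def IsNSS (rk : Finset E → ℕ) (G : Finset E) (τ : ℕ) (I : ℕ → Finset E) : Prop :=
  ∀ j ∈ Finset.Icc 1 τ,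
    I j ⊆ G \ prefixUnion I (j - 1) ∧ rk (I j) = rk (G \ prefixUnion I (j - 1))

/-- `I` is a maximum-`w`-weight independent set of the restriction of `M` to `G`. -/
def IsMaxWeightIndep (M : FinMatroid E) (w : E → ℝ) (G : Finset E) (I : Finset E) : Prop :=
  I ⊆ G ∧ M.Indep I ∧ ∀ J ⊆ G, M.Indep J → setWeight w J ≤ setWeight w I

/-- `I` is a maximum-`w`-weight base of the restriction (deletion minor) of `M` to `G`. -/
def IsMaxWeightBase (M : FinMatroid E) (w : E → ℝ) (G : Finset E) (I : Finset E) : Prop :=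
  I ⊆ G ∧ M.Indep I ∧ M.rank I = M.rank G ∧
    ∀ J ⊆ G, M.Indep J → M.rank J = M.rank G → setWeight w J ≤ setWeight w I

/-!
The weighted rank `S ↦ max {w(T) : T ⊆ S independent}` is monotone and submodular, by the
symmetric exchange property of matroids, and each greedy layer `I_t` has the same weighted rank
as the ground set left after deleting `I_1 ∪ ⋯ ∪ I_{t-1}`. For a monotone submodular `f` with
such a nested spanning system, induct on `τ`: split `R` into `R ∩ I_1` and the rest, and apply
the induction hypothesis to the contraction `B ↦ f ((R ∩ I_1) ∪ B)`, which inherits the spanning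
property of `I_2, …, I_τ`. Submodularity gives `E f(R ∩ I_1) ≥ p f(I_1) + (1 - p) f(∅)`, and
`f(I_1) = f(E)` bounds every value of the contraction; together they pay for the factor `1 - p`.
-/

section SetFunction

variable {α : Type*} [DecidableEq α] {f : Finset α → ℝ}

def Submodular (f : Finset α → ℝ) : Prop :=
  ∀ ⦃X Y : Finset α⦄ (e : α), X ⊆ Y → f (insert e Y) - f Y ≤ f (insert e X) - f X

lemma Submodular.union_sub_le (hf : Submodular f) {X Y : Finset α} (hXY : X ⊆ Y)
    (W : Finset α) : f (Y ∪ W) - f Y ≤ f (X ∪ W) - f X := by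
  induction W using Finset.induction_on with
  | empty => simp
  | insert a W _ ih =>
    rw [union_insert, union_insert]
    linarith [hf a (union_subset_union_left hXY : X ∪ W ⊆ Y ∪ W)]

lemma Submodular.comp_union (hf : Submodular f) (A : Finset α) :
    Submodular (fun B => f (A ∪ B)) := fun X Y e hXY => by
  simpa only [union_insert] using hf e (union_subset_union_right hXY : A ∪ X ⊆ A ∪ Y)

lemma Submodular.union_eq_union_of_eq (hf : Submodular f) (hmono : Monotone f)
    {X Y : Finset α} (hXY : X ⊆ Y) (h : f X = f Y) (W : Finset α) : f (W ∪ X) = f (W ∪ Y) := by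
  refine le_antisymm (hmono (union_subset_union_right hXY)) ?_
  have := hf.union_sub_le hXY W
  rw [union_comm X, union_comm Y] at this
  linarith

lemma setWeight_insert {w : α → ℝ} {T : Finset α} {a : α} (ha : a ∉ T) :
    setWeight w (insert a T) = w a + setWeight w T :=
  sum_insert ha

lemma setWeight_erase {w : α → ℝ} {T : Finset α} {a : α} (ha : a ∈ T) :
    setWeight w (T.erase a) = setWeight w T - w a :=
  sum_erase_eq_sub ha

end SetFunction

section RandomSubset

variable {α : Type*} [DecidableEq α] {p : ℝ} {S T : Finset α}

def subsetExp (p : ℝ) (S : Finset α) (g : Finset α → ℝ) : ℝ :=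
  ∑ A ∈ S.powerset, p ^ #A * (1 - p) ^ #(S \ A) * g A

@[simp] lemma subsetExp_empty (g : Finset α → ℝ) : subsetExp p ∅ g = g ∅ := by
  simp [subsetExp]

lemma subsetExp_insert {a : α} (ha : a ∉ S) (g : Finset α → ℝ) :
    subsetExp p (insert a S) g =
      p * subsetExp p S (fun A => g (insert a A)) + (1 - p) * subsetExp p S g := by
  simp only [subsetExp, sum_powerset_insert ha, mul_sum]
  rw [add_comm]
  congr 1 <;> refine sum_congr rfl fun A hA => ?_
  · have haA : a ∉ A := fun h => ha (mem_powerset.1 hA h)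
    rw [insert_sdiff_insert, sdiff_insert_of_notMem ha, card_insert_of_notMem haA]
    ring
  · have haA : a ∉ A := fun h => ha (mem_powerset.1 hA h)
    rw [insert_sdiff_of_notMem _ haA, card_insert_of_notMem (notMem_sdiff_of_notMem_left ha)]
    ring

lemma subsetExp_add (g h : Finset α → ℝ) :
    subsetExp p S (fun A => g A + h A) = subsetExp p S g + subsetExp p S h := by
  simp only [subsetExp, mul_add, sum_add_distrib]

lemma subsetExp_const_mul (c : ℝ) (g : Finset α → ℝ) :
    subsetExp p S (fun A => c * g A) = c * subsetExp p S g := by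
  simp only [subsetExp, mul_sum]
  exact sum_congr rfl fun A _ => by ring

lemma subsetExp_const (c : ℝ) : subsetExp p S (fun _ => c) = c := by
  induction S using Finset.induction_on with
  | empty => simp
  | insert a S ha ih => rw [subsetExp_insert ha, ih]; ring

lemma subsetExp_zero (g : Finset α → ℝ) : subsetExp 0 S g = g ∅ := by
  induction S using Finset.induction_on with
  | empty => simp
  | insert a S ha ih => simp [subsetExp_insert ha, ih]

lemma subsetExp_congr {g h : Finset α → ℝ} (hgh : ∀ A ⊆ S, g A = h A) :
    subsetExp p S g = subsetExp p S h :=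
  sum_congr rfl fun A hA => by rw [hgh A (mem_powerset.1 hA)]

lemma subsetExp_mono (hp0 : 0 ≤ p) (hp1 : p ≤ 1) {g h : Finset α → ℝ}
    (hgh : ∀ A ⊆ S, g A ≤ h A) : subsetExp p S g ≤ subsetExp p S h :=
  sum_le_sum fun A hA => mul_le_mul_of_nonneg_left (hgh A (mem_powerset.1 hA)) <|
    mul_nonneg (pow_nonneg hp0 _) (pow_nonneg (sub_nonneg.2 hp1) _)

lemma subsetExp_le_of_le (hp0 : 0 ≤ p) (hp1 : p ≤ 1) {g : Finset α → ℝ} {c : ℝ}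
    (hg : ∀ A ⊆ S, g A ≤ c) : subsetExp p S g ≤ c :=
  (subsetExp_mono hp0 hp1 hg).trans_eq (subsetExp_const c)

lemma le_subsetExp_of_le (hp0 : 0 ≤ p) (hp1 : p ≤ 1) {g : Finset α → ℝ} {c : ℝ}
    (hg : ∀ A ⊆ S, c ≤ g A) : c ≤ subsetExp p S g :=
  (subsetExp_const c).symm.trans_le (subsetExp_mono hp0 hp1 hg)

lemma subsetExp_union (hST : Disjoint S T) (g : Finset α → ℝ) :
    subsetExp p (S ∪ T) g = subsetExp p S (fun A => subsetExp p T (fun B => g (A ∪ B))) := by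
  induction S using Finset.induction_on generalizing g with
  | empty => simp
  | insert a S ha ih =>
    have haT : a ∉ T := disjoint_left.1 hST (mem_insert_self a S)
    have hST' : Disjoint S T := hST.mono_left (subset_insert a S)
    rw [insert_union, subsetExp_insert (by simp [ha, haT]), ih hST', ih hST', subsetExp_insert ha]
    simp only [insert_union]

lemma subsetExp_inter (hST : S ⊆ T) (g : Finset α → ℝ) :
    subsetExp p T (fun A => g (S ∩ A)) = subsetExp p S g := by
  rw [← union_sdiff_of_subset hST, subsetExp_union disjoint_sdiff]
  refine subsetExp_congr fun A hA => ?_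
  rw [← subsetExp_const (p := p) (S := T \ S) (g A)]
  refine subsetExp_congr fun B hB => ?_
  rw [inter_union_distrib_left, inter_eq_right.2 hA,
    disjoint_iff_inter_eq_empty.1 (disjoint_sdiff.mono_right hB), union_empty]

lemma Submodular.le_subsetExp {f : Finset α → ℝ} (hf : Submodular f) (hp0 : 0 ≤ p)
    (hp1 : p ≤ 1) (S : Finset α) : p * f S + (1 - p) * f ∅ ≤ subsetExp p S f := by
  induction S using Finset.induction_on generalizing f with
  | empty => rw [subsetExp_empty]; linarith
  | insert a S ha ih =>
    have h₁ : p * f (insert a S) + (1 - p) * f {a} ≤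
        subsetExp p S (fun A => f (insert a A)) := by
      simpa only [← insert_eq, union_empty] using ih (hf.comp_union {a})
    have hsub : f (insert a S) - f S ≤ f {a} - f ∅ := hf a (empty_subset S)
    have hq : 0 ≤ 1 - p := by linarith
    rw [subsetExp_insert ha]
    linear_combination mul_le_mul_of_nonneg_left h₁ hp0 + mul_le_mul_of_nonneg_left (ih hf) hq +
      mul_le_mul_of_nonneg_left hsub (mul_nonneg hp0 hq)

end RandomSubset

section NestedSpanning

variable {α : Type*} [DecidableEq α] {f : Finset α → ℝ} {p : ℝ} {H : Finset α} {τ : ℕ}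
  {J : ℕ → Finset α}

@[simp] lemma prefixUnion_zero (J : ℕ → Finset α) : prefixUnion J 0 = ∅ := by
  simp [prefixUnion]

lemma prefixUnion_succ' (J : ℕ → Finset α) (k : ℕ) :
    prefixUnion J (k + 1) = J 1 ∪ prefixUnion (fun t => J (t + 1)) k := by
  ext e
  simp only [prefixUnion, mem_union, mem_biUnion, mem_Icc]
  constructor
  · rintro ⟨_ | _ | t, ht, he⟩
    · omega
    · exact Or.inl he
    · exact Or.inr ⟨t + 1, by omega, he⟩
  · rintro (he | ⟨t, ht, he⟩)
    · exact ⟨1, by omega, he⟩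
    · exact ⟨t + 1, by omega, he⟩

/-- `IsNSS` for a real-valued set function. -/
def IsNestedSpanningSystem (f : Finset α → ℝ) (H : Finset α) (τ : ℕ) (J : ℕ → Finset α) :
    Prop :=
  ∀ t ∈ Icc 1 τ, J t ⊆ H \ prefixUnion J (t - 1) ∧ f (J t) = f (H \ prefixUnion J (t - 1))

lemma IsNestedSpanningSystem.prefixUnion_subset (hJ : IsNestedSpanningSystem f H τ J) :
    prefixUnion J τ ⊆ H :=
  biUnion_subset.2 fun t ht => (hJ t ht).1.trans sdiff_subset

lemma IsNestedSpanningSystem.tail (hf : Submodular f) (hmono : Monotone f)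
    (hJ : IsNestedSpanningSystem f H (τ + 1) J) {A : Finset α} :
    IsNestedSpanningSystem (fun B => f (A ∪ B)) (H \ J 1) τ (fun t => J (t + 1)) := by
  intro t ht
  have hrest : (H \ J 1) \ prefixUnion (fun t => J (t + 1)) (t - 1) = H \ prefixUnion J t := by
    obtain ⟨k, rfl⟩ : ∃ k, t = k + 1 := ⟨t - 1, by grind⟩
    rw [prefixUnion_succ', sdiff_sdiff_left, Nat.add_sub_cancel]
    rfl
  obtain ⟨hsub, heq⟩ := hJ (t + 1) (by grind)
  rw [Nat.add_sub_cancel] at hsub heq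
  rw [hrest]
  exact ⟨hsub, hf.union_eq_union_of_eq hmono hsub heq A⟩

theorem Submodular.le_subsetExp_prefixUnion (hf : Submodular f) (hmono : Monotone f)
    (hp0 : 0 ≤ p) (hp1 : p ≤ 1) (hJ : IsNestedSpanningSystem f H τ J) :
    (1 - (1 - p) ^ τ) * subsetExp p H f + (1 - p) ^ τ * f ∅ ≤
      subsetExp p (prefixUnion J τ) f := by
  induction τ generalizing f H J with
  | zero => simp
  | succ τ ih =>
    obtain ⟨hJ₁H, hJ₁f⟩ : J 1 ⊆ H ∧ f (J 1) = f H := by simpa using hJ 1 (by simp)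
    set H' := H \ J 1
    set Q' := prefixUnion (fun t => J (t + 1)) τ
    have hQ'H' : Q' ⊆ H' := (hJ.tail hf hmono (A := ∅)).prefixUnion_subset
    rw [← union_sdiff_of_subset hJ₁H, prefixUnion_succ',
      subsetExp_union disjoint_sdiff, subsetExp_union (disjoint_sdiff.mono_right hQ'H')]
    set s := subsetExp p (J 1) fun A => subsetExp p H' fun B => f (A ∪ B)
    have hs : s ≤ f H := subsetExp_le_of_le hp0 hp1 fun A hA => subsetExp_le_of_le hp0 hp1
      fun B hB => hmono (union_subset (hA.trans hJ₁H) (hB.trans sdiff_subset))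
    have hchord : p * f H + (1 - p) * f ∅ ≤ subsetExp p (J 1) f :=
      hJ₁f ▸ hf.le_subsetExp hp0 hp1 (J 1)
    have hstep : (1 - (1 - p) ^ τ) * s + (1 - p) ^ τ * subsetExp p (J 1) f ≤
        subsetExp p (J 1) fun A => subsetExp p Q' fun B => f (A ∪ B) := by
      rw [← subsetExp_const_mul, ← subsetExp_const_mul, ← subsetExp_add]
      exact subsetExp_mono hp0 hp1 fun A _ => by
        simpa using ih (hf.comp_union A) (fun X Y h => hmono (union_subset_union_right h))
          (hJ.tail hf hmono)
    have hpow : 0 ≤ (1 - p) ^ τ := pow_nonneg (sub_nonneg.2 hp1) τ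
    refine le_trans ?_ hstep
    linear_combination mul_le_mul_of_nonneg_left hchord hpow +
      mul_nonneg hpow (mul_nonneg hp0 (sub_nonneg.2 hs))

end NestedSpanning

namespace FinMatroid

variable {M : FinMatroid E}

def toMatroid (M : FinMatroid E) : Matroid E :=
  (IndepMatroid.ofFinset Set.univ M.Indep M.empty_indep M.indep_subset M.indep_exchange
    fun _ _ => Set.subset_univ _).matroid

@[simp] lemma toMatroid_indep_coe {I : Finset E} : M.toMatroid.Indep I ↔ M.Indep I := by
  simp [toMatroid]

lemma exists_symm_exchange {S T : Finset E} {e : E} (hS : M.Indep S) (hT : M.Indep T)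
    (heT : e ∈ T) (hdep : ¬ M.Indep (insert e S)) :
    ∃ s ∈ S, s ∉ T ∧ M.Indep (insert e (S.erase s)) ∧ M.Indep (insert s (T.erase e)) := by
  set N := M.toMatroid
  have hS' : N.Indep S := toMatroid_indep_coe.2 hS
  have hT' : N.Indep (T \ {e} : Set E) := by
    simpa using (toMatroid_indep_coe.2 hT).sdiff {e}
  have heS : e ∉ (S : Set E) := fun h => hdep (by rwa [insert_eq_of_mem h])
  have hecl : e ∈ N.closure S := by
    by_contra h
    exact hdep (toMatroid_indep_coe.1
      (by simpa using (hS'.insert_indep_iff_of_notMem heS).2 ⟨trivial, h⟩))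
  -- exists since `e` is spanned by its fundamental circuit minus `e`, but not by `T - e`
  obtain ⟨s, hsC, hsT⟩ : ∃ s ∈ N.fundCircuit e S \ {e}, s ∉ N.closure (T \ {e} : Set E) := by
    by_contra! h
    exact (toMatroid_indep_coe.2 hT).notMem_closure_sdiff_of_mem heT
      (N.closure_subset_closure_of_subset_closure h
        ((hS'.fundCircuit_isCircuit hecl heS).mem_closure_sdiff_singleton_of_mem
          (N.mem_fundCircuit e S)))
  have hse : s ≠ e := hsC.2
  have hsT' : s ∉ (T \ {e} : Set E) := fun h => hsT (N.subset_closure _ (Set.subset_univ _) h)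
  have hsS : s ∈ S := by
    simpa [hse] using N.fundCircuit_subset_insert e S hsC.1
  refine ⟨s, hsS, fun hs => hsT' (by simp [hs, hse]), ?_, ?_⟩
  · rw [← toMatroid_indep_coe]
    simpa [Set.insert_sdiff_singleton_comm hse.symm] using
      (hS'.mem_fundCircuit_iff hecl heS).1 hsC.1
  · rw [← toMatroid_indep_coe]
    simpa using (hT'.insert_indep_iff_of_notMem hsT').2 ⟨trivial, hsT⟩

lemma card_le_rank {I S : Finset E} (hI : M.Indep I) (hIS : I ⊆ S) : #I ≤ M.rank S :=
  le_csSup ⟨#S, by rintro _ ⟨T, hTS, -, rfl⟩; exact card_le_card hTS⟩ ⟨I, hIS, hI, rfl⟩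

lemma card_prefixUnion_le {I : ℕ → Finset E} {τ : ℕ} (hI : ∀ t ∈ Icc 1 τ, M.Indep (I t)) :
    #(prefixUnion I τ) ≤ τ * M.rank univ :=
  calc #(prefixUnion I τ) ≤ ∑ t ∈ Icc 1 τ, #(I t) := card_biUnion_le
    _ ≤ #(Icc 1 τ) • M.rank univ :=
        sum_le_card_nsmul _ _ _ fun t ht => M.card_le_rank (hI t ht) (subset_univ _)
    _ = τ * M.rank univ := by simp

def weightedRank (M : FinMatroid E) (w : E → ℝ) : Finset E → ℝ :=
  bestVal {T | M.Indep T} (setWeight w)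

variable {w : E → ℝ}

lemma exists_isMaxWeightIndep (M : FinMatroid E) (w : E → ℝ) (S : Finset E) :
    ∃ T, IsMaxWeightIndep M w S T := by
  classical
  obtain ⟨T, hT, hmax⟩ := (S.powerset.filter M.Indep).exists_max_image (setWeight w)
    ⟨∅, by simp [M.empty_indep]⟩
  simp only [mem_filter, mem_powerset] at hT hmax
  exact ⟨T, hT.1, hT.2, fun J hJ hJi => hmax J ⟨hJ, hJi⟩⟩

lemma _root_.IsMaxWeightIndep.weightedRank_eq {S T : Finset E}
    (h : IsMaxWeightIndep M w S T) : M.weightedRank w S = setWeight w T :=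
  IsGreatest.csSup_eq ⟨⟨T, ⟨h.1, h.2.1⟩, rfl⟩, by
    rintro _ ⟨J, ⟨hJ, hJi⟩, rfl⟩
    exact h.2.2 J hJ hJi⟩

lemma setWeight_le_weightedRank {S T : Finset E} (hTS : T ⊆ S) (hT : M.Indep T) :
    setWeight w T ≤ M.weightedRank w S := by
  obtain ⟨B, hB⟩ := M.exists_isMaxWeightIndep w S
  exact hB.weightedRank_eq ▸ hB.2.2 T hTS hT

@[simp] lemma weightedRank_empty : M.weightedRank w ∅ = 0 := by
  obtain ⟨B, hB⟩ := M.exists_isMaxWeightIndep w ∅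
  simp [hB.weightedRank_eq, subset_empty.1 hB.1, setWeight]

lemma weightedRank_mono : Monotone (M.weightedRank w) := fun S S' h => by
  obtain ⟨B, hB⟩ := M.exists_isMaxWeightIndep w S
  exact hB.weightedRank_eq ▸ setWeight_le_weightedRank (hB.1.trans h) hB.2.1

lemma weightedRank_nonneg (S : Finset E) : 0 ≤ M.weightedRank w S :=
  weightedRank_empty (M := M) (w := w) ▸ weightedRank_mono (empty_subset S)

lemma _root_.IsMaxWeightIndep.weightedRank_eq_weightedRank {G I : Finset E}
    (h : IsMaxWeightIndep M w G I) : M.weightedRank w I = M.weightedRank w G :=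
  le_antisymm (weightedRank_mono h.1)
    (h.weightedRank_eq ▸ setWeight_le_weightedRank subset_rfl h.2.1)

lemma weightedRank_submodular : Submodular (M.weightedRank w) := by
  intro X Y e hXY
  by_cases heX : e ∈ X
  · simp [insert_eq_of_mem heX, insert_eq_of_mem (hXY heX)]
  obtain ⟨T, hT⟩ := M.exists_isMaxWeightIndep w (insert e Y)
  obtain ⟨S, hS⟩ := M.exists_isMaxWeightIndep w X
  rw [hT.weightedRank_eq, hS.weightedRank_eq]
  by_cases heT : e ∉ T
  · have h₁ := setWeight_le_weightedRank (w := w)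
      ((subset_insert_iff_of_notMem heT).1 hT.1) hT.2.1
    have h₂ := weightedRank_mono (M := M) (w := w) (subset_insert e X)
    rw [hS.weightedRank_eq] at h₂
    linarith
  rw [not_not] at heT
  have heS : e ∉ S := fun h => heX (hS.1 h)
  have hTeY : T.erase e ⊆ Y := subset_insert_iff.1 hT.1
  by_cases hSe : M.Indep (insert e S)
  · have h₁ := setWeight_le_weightedRank (w := w) (insert_subset_insert e hS.1) hSe
    have h₂ := setWeight_le_weightedRank (w := w) hTeY (M.indep_subset hT.2.1 (erase_subset e T))
    rw [setWeight_insert heS] at h₁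
    rw [setWeight_erase heT] at h₂
    linarith
  obtain ⟨s, hsS, hsT, h₁, h₂⟩ := exists_symm_exchange hS.2.1 hT.2.1 heT hSe
  have h₁ := setWeight_le_weightedRank (w := w)
    (insert_subset_insert e ((erase_subset s S).trans hS.1)) h₁
  have h₂ := setWeight_le_weightedRank (w := w) (insert_subset (hXY (hS.1 hsS)) hTeY) h₂
  rw [setWeight_insert (fun h => heS (mem_of_mem_erase h)), setWeight_erase hsS] at h₁
  rw [setWeight_insert (fun h => hsT (mem_of_mem_erase h)), setWeight_erase heT] at h₂
  linarith

end FinMatroid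

lemma expec_const_eq_subsetExp (p : ℝ) (g : Finset E → ℝ) :
    expec (fun _ => p) g = subsetExp p univ g := by
  simp [expec, subsetExp, prodWeight, compl_eq_univ_sdiff]

lemma one_sub_pow_le_of_log_le {p ε : ℝ} {τ : ℕ} (hp : 0 < p) (hp1 : p ≤ 1) (hε : 0 < ε)
    (hτ : 1 / p * Real.log (1 / ε) ≤ τ) : (1 - p) ^ τ ≤ ε := by
  have hlog : Real.log (1 / ε) ≤ p * τ := by
    rwa [one_div_mul_eq_div, div_le_iff₀ hp, mul_comm] at hτ
  calc (1 - p) ^ τ ≤ Real.exp (-p) ^ τ :=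
        pow_le_pow_left₀ (by linarith) (Real.one_sub_le_exp_neg p) τ
    _ = Real.exp (-(p * τ)) := by rw [← Real.exp_nat_mul]; ring_nf
    _ ≤ Real.exp (-Real.log (1 / ε)) := Real.exp_le_exp.2 (by linarith)
    _ = ε := by rw [one_div, Real.log_inv, neg_neg, Real.exp_log hε]

theorem stmt_4_general (M : FinMatroid E) (w : E → ℝ)
    (p : ℝ) (hp0 : 0 ≤ p) (hp1 : p ≤ 1)
    (τ : ℕ)
    (I : ℕ → Finset E)
    (hI : ∀ t ∈ Finset.Icc 1 τ, IsMaxWeightIndep M w ((prefixUnion I (t - 1))ᶜ) (I t))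
    (Q : Finset E) (hQ : Q = prefixUnion I τ) :
    Q.card ≤ τ * M.rank Finset.univ ∧
    ((1 - (1 - p) ^ τ) *
        expec (fun _ => p) (fun A => bestVal {T | M.Indep T} (setWeight w) A)
      ≤ expec (fun _ => p) (fun A => bestVal {T | M.Indep T} (setWeight w) (Q ∩ A))) ∧
    (∀ ε : ℝ, 0 < ε → ε < 1 → (1 / p) * Real.log (1 / ε) ≤ (τ : ℝ) →
      (1 - ε) * expec (fun _ => p) (fun A => bestVal {T | M.Indep T} (setWeight w) A)
        ≤ expec (fun _ => p) (fun A => bestVal {T | M.Indep T} (setWeight w) (Q ∩ A))) := by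
  subst hQ
  have hR : expec (fun _ => p) (fun A => bestVal {T | M.Indep T} (setWeight w) A) =
      subsetExp p univ (M.weightedRank w) :=
    expec_const_eq_subsetExp p _
  have hQR : expec (fun _ => p)
      (fun A => bestVal {T | M.Indep T} (setWeight w) (prefixUnion I τ ∩ A)) =
        subsetExp p (prefixUnion I τ) (M.weightedRank w) :=
    (expec_const_eq_subsetExp p _).trans (subsetExp_inter (subset_univ _) _)
  have hsys : IsNestedSpanningSystem (M.weightedRank w) univ τ I := fun t ht => by
    rw [← compl_eq_univ_sdiff]
    exact ⟨(hI t ht).1, (hI t ht).weightedRank_eq_weightedRank⟩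
  have hmain := M.weightedRank_submodular.le_subsetExp_prefixUnion M.weightedRank_mono
    hp0 hp1 hsys
  rw [FinMatroid.weightedRank_empty, mul_zero, add_zero] at hmain
  rw [hR, hQR]
  refine ⟨M.card_prefixUnion_le fun t ht => (hI t ht).2.1, hmain, fun ε hε0 _ hτε => ?_⟩
  rcases hp0.eq_or_lt with rfl | hp
  · simp [subsetExp_zero]
  refine le_trans (mul_le_mul_of_nonneg_right ?_ ?_) hmain
  · linarith [one_sub_pow_le_of_log_le hp hp1 hε0 hτε]
  · exact le_subsetExp_of_le hp0 hp1 fun A _ => M.weightedRank_nonneg A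

/-- The greedy sparsifier for additive optimization over a matroid:
if `I_t` is a maximum-weight independent set of `M ∖ (I_1 ∪ ⋯ ∪ I_{t-1})` for each
`t = 1, …, τ` and `Q = I_1 ∪ ⋯ ∪ I_τ`, then `|Q| ≤ τ · Rank(M)` and the expected
sparsified optimum is at least `(1 − (1−p)^τ)` times the stochastic optimum; in
particular, for `τ ≥ (1/p)·log(1/ε)` the factor is at least `1 − ε`. -/
theorem stmt_4 (M : FinMatroid E) (w : E → ℝ) (hw : ∀ e, 0 ≤ w e)
    (p : ℝ) (hp0 : 0 ≤ p) (hp1 : p ≤ 1)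
    (τ : ℕ) (hτ : 0 < τ)
    (I : ℕ → Finset E)
    (hI : ∀ t ∈ Finset.Icc 1 τ, IsMaxWeightIndep M w ((prefixUnion I (t - 1))ᶜ) (I t))
    (Q : Finset E) (hQ : Q = prefixUnion I τ) :
    Q.card ≤ τ * M.rank Finset.univ ∧
    ((1 - (1 - p) ^ τ) *
        expec (fun _ => p) (fun A => bestVal {T | M.Indep T} (setWeight w) A)
      ≤ expec (fun _ => p) (fun A => bestVal {T | M.Indep T} (setWeight w) (Q ∩ A))) ∧
    (∀ ε : ℝ, 0 < ε → ε < 1 → (1 / p) * Real.log (1 / ε) ≤ (τ : ℝ) →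
      (1 - ε) * expec (fun _ => p) (fun A => bestVal {T | M.Indep T} (setWeight w) A)
        ≤ expec (fun _ => p) (fun A => bestVal {T | M.Indep T} (setWeight w) (Q ∩ A))) :=
  stmt_4_general M w p hp0 hp1 τ I hI Q hQ
end
end

section
/- Let M be a finite matroid on ground set E = {e_1, …, e_n} with rank function Rank, let w_1 ≥ w_2 ≥ … ≥ w_n > 0 be weights ordered decreasingly (with the convention w_{n+1} = 0), let p ∈ [0,1] and ε ∈ [0,1]. Suppose Q ⊆ E satisfies E[ Rank(Q ∩ R ∩ {e_1,…,e_j}) ] ≥ (1−ε) · E[ Rank(R ∩ {e_1,…,e_j}) ] for every j ∈ {1,…,n} with w_j > w_{j+1}. Then E[ max{ w(T) : T ⊆ Q ∩ R, T independent in M } ] ≥ (1−ε) · E[ max{ w(T) : T ⊆ R, T independent in M } ]. -/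
open Finset

noncomputable section

variable {E : Type*} [Fintype E] [DecidableEq E]

/-- The set `{e_1, …, e_j}` of the `j` heaviest elements (elements of `Fin n` are
identified with `e_1, …, e_n`, so `e_i` is the element `i - 1 : Fin n`). -/
def prefixSet (n j : ℕ) : Finset (Fin n) :=
  Finset.univ.filter fun x => (x : ℕ) + 1 ≤ j

/-!
Writing `w_i = ∑_{j ≥ i} (w_j - w_{j+1})` turns the weight of a set `T` into
`∑_j (w_j - w_{j+1}) |T ∩ {e_1, …, e_j}|`. For independent `T ⊆ S` each term is at most
`(w_j - w_{j+1}) Rank(S ∩ {e_1, …, e_j})`, and augmenting a basis of each prefix of `S` to one of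
the next gives a single independent set attaining all these bounds, so the optimum is
`∑_j (w_j - w_{j+1}) Rank(S ∩ {e_1, …, e_j})`. Expectation is linear, the coefficients are
nonnegative and vanish unless `w_j > w_{j+1}`, so the hypothesis transfers term by term.
-/

namespace FinMatroid

variable (M : FinMatroid E)

lemma bddAbove_indep_card (S : Finset E) :
    BddAbove {k | ∃ T ⊆ S, M.Indep T ∧ T.card = k} :=
  ⟨S.card, by rintro _ ⟨T, hTS, -, rfl⟩; exact card_le_card hTS⟩

lemma exists_indep_card_eq_rank (S : Finset E) :
    ∃ T ⊆ S, M.Indep T ∧ T.card = M.rank S :=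
  Nat.sSup_mem (s := {k | ∃ T ⊆ S, M.Indep T ∧ T.card = k})
    ⟨0, ∅, empty_subset S, M.empty_indep, card_empty⟩ (M.bddAbove_indep_card S)

variable {M}

lemma card_le_rank_s7 {S T : Finset E} (hTS : T ⊆ S) (hT : M.Indep T) : T.card ≤ M.rank S :=
  le_csSup (M.bddAbove_indep_card S) ⟨T, hTS, hT, rfl⟩

lemma exists_superset_indep_card_eq_rank {I S : Finset E} (hIS : I ⊆ S) (hI : M.Indep I) :
    ∃ J, I ⊆ J ∧ J ⊆ S ∧ M.Indep J ∧ J.card = M.rank S := by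
  by_cases hc : I.card = M.rank S
  · exact ⟨I, subset_rfl, hIS, hI, hc⟩
  obtain ⟨T, hTS, hT, hTc⟩ := M.exists_indep_card_eq_rank S
  obtain ⟨e, heT, heI, hins⟩ :=
    M.indep_exchange hI hT (hTc ▸ (card_le_rank_s7 hIS hI).lt_of_ne hc)
  obtain ⟨J, hIJ, hJS, hJ, hJc⟩ :=
    exists_superset_indep_card_eq_rank (insert_subset (hTS heT) hIS) hins
  exact ⟨J, (subset_insert e I).trans hIJ, hJS, hJ, hJc⟩
termination_by M.rank S - I.card
decreasing_by
  have := (card_le_rank_s7 hIS hI).lt_of_ne hc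
  rw [card_insert_of_notMem heI]
  omega

lemma exists_indep_rank_le_card_inter {F : ℕ → Finset E} (hF : Monotone F) (m : ℕ) :
    ∃ I, M.Indep I ∧ I ⊆ F m ∧ ∀ j ≤ m, M.rank (F j) ≤ (I ∩ F j).card := by
  induction m with
  | zero =>
    obtain ⟨I, -, hIF, hI, hIc⟩ :=
      exists_superset_indep_card_eq_rank (empty_subset _) M.empty_indep
    refine ⟨I, hI, hIF, fun j hj => ?_⟩
    rw [Nat.le_zero.mp hj, inter_eq_left.mpr hIF, hIc]
  | succ m ih =>
    obtain ⟨I, hI, hIF, hrank⟩ := ih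
    obtain ⟨J, hIJ, hJF, hJ, hJc⟩ :=
      exists_superset_indep_card_eq_rank (hIF.trans (hF m.le_succ)) hI
    refine ⟨J, hJ, hJF, fun j hj => ?_⟩
    rcases hj.lt_or_eq with hj | rfl
    · exact (hrank j (Nat.lt_succ_iff.mp hj)).trans
        (card_le_card (inter_subset_inter_right hIJ))
    · rw [inter_eq_left.mpr hJF, hJc]

end FinMatroid

@[simp]
lemma mem_prefixSet {n j : ℕ} {x : Fin n} : x ∈ prefixSet n j ↔ (x : ℕ) + 1 ≤ j := by
  simp [prefixSet]

lemma prefixSet_mono (n : ℕ) : Monotone (prefixSet n) :=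
  fun _ _ hij _ hx => mem_prefixSet.mpr ((mem_prefixSet.mp hx).trans hij)

/-- Layer-cake decomposition of the weight `w_i = ∑_{j ≥ i} (w_j - w_{j+1})`. -/
lemma setWeight_eq_sum_gap_mul_card {n : ℕ} {w : ℕ → ℝ} (hwlast : w (n + 1) = 0)
    (T : Finset (Fin n)) :
    setWeight (fun x : Fin n => w ((x : ℕ) + 1)) T
      = ∑ j ∈ Icc 1 n, (w j - w (j + 1)) * ((T ∩ prefixSet n j).card : ℝ) := by
  have layer (x : Fin n) :
      w ((x : ℕ) + 1) = ∑ j ∈ Icc 1 n, if x ∈ prefixSet n j then w j - w (j + 1) else 0 := by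
    have hIco : {j ∈ Icc 1 n | (x : ℕ) + 1 ≤ j} = Ico ((x : ℕ) + 1) (n + 1) := by
      ext j
      simp only [mem_filter, mem_Icc, mem_Ico]
      omega
    have htel := sum_Ico_sub (fun j => -w j) (show (x : ℕ) + 1 ≤ n + 1 by omega)
    simp only [neg_sub_neg] at htel
    simp only [mem_prefixSet, ← sum_filter, hIco, htel, hwlast]
    ring
  simp only [setWeight, layer]
  rw [sum_comm]
  refine sum_congr rfl fun j _ => ?_
  rw [sum_ite_mem, sum_const, nsmul_eq_mul, mul_comm]

lemma sub_succ_nonneg {n : ℕ} {w : ℕ → ℝ} (hwdec : ∀ i j, 1 ≤ i → i ≤ j → j ≤ n → w j ≤ w i)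
    (hwnonneg : ∀ j ∈ Icc 1 n, 0 ≤ w j) (hwlast : w (n + 1) = 0) :
    ∀ j ∈ Icc 1 n, 0 ≤ w j - w (j + 1) := by
  intro j hj
  rw [sub_nonneg]
  rcases (mem_Icc.mp hj).2.lt_or_eq with hlt | rfl
  · exact hwdec j (j + 1) (mem_Icc.mp hj).1 j.le_succ hlt
  · exact hwlast ▸ hwnonneg j hj

/-- An independent `T ⊆ S` meets each prefix in at most its rank, and the common basis of the
prefix chain meets each prefix in exactly its rank. -/
lemma bestVal_indep_eq_sum_gap_mul_rank {n : ℕ} (M : FinMatroid (Fin n)) {w : ℕ → ℝ}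
    (hgap : ∀ j ∈ Icc 1 n, 0 ≤ w j - w (j + 1)) (hwlast : w (n + 1) = 0) (S : Finset (Fin n)) :
    bestVal {T | M.Indep T} (setWeight fun x : Fin n => w ((x : ℕ) + 1)) S
      = ∑ j ∈ Icc 1 n, (w j - w (j + 1)) * (M.rank (S ∩ prefixSet n j) : ℝ) := by
  refine IsGreatest.csSup_eq ⟨?_, ?_⟩
  · obtain ⟨I, hI, hIS, hrank⟩ := M.exists_indep_rank_le_card_inter (F := (S ∩ prefixSet n ·))
      (fun _ _ h => inter_subset_inter_left (prefixSet_mono n h)) n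
    have hIS : I ⊆ S := hIS.trans inter_subset_left
    refine ⟨I, ⟨hIS, hI⟩, ?_⟩
    rw [setWeight_eq_sum_gap_mul_card hwlast]
    refine sum_congr rfl fun j hj => ?_
    have hcard : (I ∩ (S ∩ prefixSet n j)).card = M.rank (S ∩ prefixSet n j) :=
      (FinMatroid.card_le_rank_s7 inter_subset_right (M.indep_subset hI inter_subset_left)).antisymm
        (hrank j (mem_Icc.mp hj).2)
    rw [← inter_eq_left.mpr hIS, inter_assoc, hcard]
  · rintro _ ⟨T, ⟨hTS, hT⟩, rfl⟩
    rw [setWeight_eq_sum_gap_mul_card hwlast]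
    gcongr with j hj
    · exact hgap j hj
    · exact FinMatroid.card_le_rank_s7 (inter_subset_inter_right hTS)
        (M.indep_subset hT inter_subset_left)

lemma expec_sum_mul (π : E → ℝ) {ι : Type*} (s : Finset ι) (c : ι → ℝ)
    (g : ι → Finset E → ℝ) :
    expec π (fun A => ∑ j ∈ s, c j * g j A) = ∑ j ∈ s, c j * expec π (g j) := by
  simp only [expec, mul_sum, mul_left_comm (prodWeight π _)]
  exact sum_comm

theorem stmt_7_general (n : ℕ) (M : FinMatroid (Fin n)) (w : ℕ → ℝ)
    (hwpos : ∀ j ∈ Finset.Icc 1 n, 0 < w j)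
    (hwdec : ∀ i j, 1 ≤ i → i ≤ j → j ≤ n → w j ≤ w i)
    (hwlast : w (n + 1) = 0)
    (p : ℝ)
    (ε : ℝ)
    (Q : Finset (Fin n))
    (hyp : ∀ j ∈ Finset.Icc 1 n, w (j + 1) < w j →
      (1 - ε) * expec (fun _ => p) (fun A => (M.rank (A ∩ prefixSet n j) : ℝ))
        ≤ expec (fun _ => p) (fun A => (M.rank (Q ∩ A ∩ prefixSet n j) : ℝ))) :
    (1 - ε) * expec (fun _ => p)
        (fun A => bestVal {T | M.Indep T} (setWeight fun x : Fin n => w ((x : ℕ) + 1)) A)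
      ≤ expec (fun _ => p)
        (fun A => bestVal {T | M.Indep T} (setWeight fun x : Fin n => w ((x : ℕ) + 1)) (Q ∩ A)) := by
  have hgap := sub_succ_nonneg hwdec (fun j hj => (hwpos j hj).le) hwlast
  simp only [bestVal_indep_eq_sum_gap_mul_rank M hgap hwlast, expec_sum_mul, mul_sum]
  refine sum_le_sum fun j hj => ?_
  rcases (hgap j hj).lt_or_eq with hlt | heq
  · rw [mul_left_comm]
    exact mul_le_mul_of_nonneg_left (hyp j hj (sub_pos.mp hlt)) (hgap j hj)
  · simp [← heq]

/-- Weighted-to-unweighted reduction for matroid sparsification: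
if a set `Q` preserves (up to a factor `1 − ε`) the expected rank of the active elements
within every weight-prefix `{e_1, …, e_j}` with `w_j > w_{j+1}`, then it preserves the
expected maximum weight of an independent set of active elements up to `1 − ε`. -/
theorem stmt_7 (n : ℕ) (M : FinMatroid (Fin n)) (w : ℕ → ℝ)
    (hwpos : ∀ j ∈ Finset.Icc 1 n, 0 < w j)
    (hwdec : ∀ i j, 1 ≤ i → i ≤ j → j ≤ n → w j ≤ w i)
    (hwlast : w (n + 1) = 0)
    (p : ℝ) (hp0 : 0 ≤ p) (hp1 : p ≤ 1)
    (ε : ℝ) (hε0 : 0 ≤ ε) (hε1 : ε ≤ 1)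
    (Q : Finset (Fin n))
    (hyp : ∀ j ∈ Finset.Icc 1 n, w (j + 1) < w j →
      (1 - ε) * expec (fun _ => p) (fun A => (M.rank (A ∩ prefixSet n j) : ℝ))
        ≤ expec (fun _ => p) (fun A => (M.rank (Q ∩ A ∩ prefixSet n j) : ℝ))) :
    (1 - ε) * expec (fun _ => p)
        (fun A => bestVal {T | M.Indep T} (setWeight fun x : Fin n => w ((x : ℕ) + 1)) A)
      ≤ expec (fun _ => p)
        (fun A => bestVal {T | M.Indep T} (setWeight fun x : Fin n => w ((x : ℕ) + 1)) (Q ∩ A)) :=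
  stmt_7_general n M w hwpos hwdec hwlast p ε Q hyp
end
end

section
/- Let M_1, …, M_k be matroids on the same finite ground set E, with M_ℓ = (E, 𝓘_ℓ), and let 𝓘 = 𝓘_1 ∩ … ∩ 𝓘_k be their common independent sets. Let S_1, S_2 ∈ 𝓘, let p ∈ [0,1], and let R be a random subset of E containing each element independently with probability p. Then there exists a (deterministic) map T : 2^E → 2^E such that the random set T(R) satisfies: (1) S_1 ∩ S_2 ⊆ T(R) with probability 1; (2) T(R) ∈ 𝓘 with probability 1; (3) T(R) ⊆ (S_1 ∩ R) ∪ S_2, and (S_1 \ S_2) ∩ R ⊆ T(R), so Pr[e ∈ T(R)] = p for every e ∈ S_1 \ S_2; and (4) Pr[f ∈ T(R)] ≥ (1−p)^k for every f ∈ S_2 \ S_1. -/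
open Finset

noncomputable section

variable {E : Type*} [Fintype E] [DecidableEq E]

namespace Stmt10

/-- greedy extension to a maximal independent subset, with fuel. -/
lemma exists_maximal_aux (N : FinMatroid E) (G : Finset E) :
    ∀ (n : ℕ) (Y : Finset E), N.Indep Y → Y ⊆ G → G.card ≤ Y.card + n →
    ∃ Z, Y ⊆ Z ∧ Z ⊆ G ∧ N.Indep Z ∧ ∀ x ∈ G, x ∉ Z → ¬ N.Indep (insert x Z) := by
  intro n
  induction n with
  | zero =>
      intro Y hY hYG hcard
      have : Y = G := Finset.eq_of_subset_of_card_le hYG (by omega)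
      subst this
      exact ⟨Y, Finset.Subset.rfl, Finset.Subset.rfl, hY, fun x hx hx' => absurd hx hx'⟩
  | succ n ih =>
      intro Y hY hYG hcard
      by_cases h : ∃ x ∈ G, x ∉ Y ∧ N.Indep (insert x Y)
      · obtain ⟨x, hxG, hxY, hind⟩ := h
        have hsub : insert x Y ⊆ G := Finset.insert_subset hxG hYG
        have hc : (insert x Y).card = Y.card + 1 := Finset.card_insert_of_notMem hxY
        obtain ⟨Z, hZ1, hZ2, hZ3, hZ4⟩ := ih (insert x Y) hind hsub (by omega)
        exact ⟨Z, (Finset.subset_insert x Y).trans hZ1, hZ2, hZ3, hZ4⟩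
      · push_neg at h
        exact ⟨Y, Finset.Subset.rfl, hYG, hY, h⟩

lemma exists_maximal (N : FinMatroid E) {G Y : Finset E} (hY : N.Indep Y) (hYG : Y ⊆ G) :
    ∃ Z, Y ⊆ Z ∧ Z ⊆ G ∧ N.Indep Z ∧ ∀ x ∈ G, x ∉ Z → ¬ N.Indep (insert x Z) :=
  exists_maximal_aux N G G.card Y hY hYG (by omega)

/-- any independent subset of `G` has card at most that of a maximal one. -/
lemma card_le_of_maximal (N : FinMatroid E) {G Z W : Finset E}
    (hZ : N.Indep Z) (hZG : Z ⊆ G) (hmax : ∀ x ∈ G, x ∉ Z → ¬ N.Indep (insert x Z))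
    (hW : N.Indep W) (hWG : W ⊆ G) : W.card ≤ Z.card := by
  by_contra h
  push_neg at h
  obtain ⟨x, hxW, hxZ, hind⟩ := N.indep_exchange hZ hW h
  exact hmax x (hWG hxW) hxZ hind

/-- The victim lemma: the heart of the construction. -/
lemma exists_victim (N : FinMatroid E) {T J : Finset E} {e : E}
    (hT : N.Indep T) (hJ : N.Indep J) (heJ : e ∈ J) (heT : e ∉ T)
    (hdep : ¬ N.Indep (insert e T)) :
    ∃ v, v ∈ T ∧ v ∉ J ∧ N.Indep (insert e (T.erase v)) ∧ N.Indep (insert v (J.erase e)) := by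
  classical
  -- a minimal dependent subset of `insert e T`
  set 𝒮 : Finset (Finset E) := (insert e T).powerset.filter (fun X => ¬ N.Indep X) with h𝒮
  have hS : (insert e T) ∈ 𝒮 := by
    simp [h𝒮, Finset.mem_filter, Finset.mem_powerset, hdep]
  obtain ⟨C, hC𝒮, hCmin⟩ := Finset.exists_min_image 𝒮 Finset.card ⟨_, hS⟩
  rw [h𝒮, Finset.mem_filter, Finset.mem_powerset] at hC𝒮
  obtain ⟨hCsub, hCdep⟩ := hC𝒮
  have heC : e ∈ C := by
    by_contra he
    exact hCdep (N.indep_subset hT (fun x hx => by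
      rcases Finset.mem_insert.mp (hCsub hx) with h | h
      · exact absurd (h ▸ hx) he
      · exact h))
  have herase : ∀ x ∈ C, N.Indep (C.erase x) := by
    intro x hx
    by_contra hdep'
    have hmem : C.erase x ∈ 𝒮 := by
      rw [h𝒮, Finset.mem_filter, Finset.mem_powerset]
      exact ⟨(Finset.erase_subset x C).trans hCsub, hdep'⟩
    have := hCmin _ hmem
    have := Finset.card_erase_of_mem hx
    have hpos : 0 < C.card := Finset.card_pos.mpr ⟨x, hx⟩
    omega
  -- CT2 : for every v ∈ C \ {e},  insert e (T.erase v) is independent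
  have CT2 : ∀ v ∈ C.erase e, N.Indep (insert e (T.erase v)) := by
    intro v hv
    have hvC : v ∈ C := Finset.mem_of_mem_erase hv
    have hvne : v ≠ e := Finset.ne_of_mem_erase hv
    have hvT : v ∈ T := by
      rcases Finset.mem_insert.mp (hCsub hvC) with h | h
      · exact absurd h hvne
      · exact h
    obtain ⟨Z, hZ1, hZ2, hZ3, hZ4⟩ := exists_maximal N (herase v hvC)
      ((Finset.erase_subset v C).trans hCsub)
    -- T is maximal independent in insert e T
    have hTmax : ∀ x ∈ insert e T, x ∉ T → ¬ N.Indep (insert x T) := by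
      intro x hx hxT
      rcases Finset.mem_insert.mp hx with h | h
      · subst h; exact hdep
      · exact absurd h hxT
    have hcardZT : T.card ≤ Z.card :=
      card_le_of_maximal N hZ3 hZ2 hZ4 hT (Finset.subset_insert e T)
    have hvZ : v ∉ Z := by
      intro hvZ
      have : C ⊆ Z := by
        intro x hx
        by_cases hxv : x = v
        · exact hxv ▸ hvZ
        · exact hZ1 (Finset.mem_erase.mpr ⟨hxv, hx⟩)
      exact hCdep (N.indep_subset hZ3 this)
    have heZ : e ∈ Z := by
      by_contra heZ
      have : Z ⊆ T.erase v := by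
        intro x hx
        have hxet : x ∈ insert e T := hZ2 hx
        rcases Finset.mem_insert.mp hxet with h | h
        · exact absurd (h ▸ hx) heZ
        · exact Finset.mem_erase.mpr ⟨fun hxv => hvZ (hxv ▸ hx), h⟩
      have := Finset.card_le_card this
      have := Finset.card_erase_of_mem hvT
      have hposT : 0 < T.card := Finset.card_pos.mpr ⟨v, hvT⟩
      omega
    have hZsub : Z ⊆ (insert e T).erase v := by
      intro x hx
      exact Finset.mem_erase.mpr ⟨fun h => hvZ (h ▸ hx), hZ2 hx⟩
    have hcards : ((insert e T).erase v).card = T.card := by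
      rw [Finset.card_erase_of_mem (Finset.mem_insert_of_mem hvT),
        Finset.card_insert_of_notMem heT]
      omega
    have hZeq : Z = (insert e T).erase v :=
      Finset.eq_of_subset_of_card_le hZsub (by omega)
    have : (insert e T).erase v = insert e (T.erase v) := by
      rw [Finset.erase_insert_of_ne (Ne.symm hvne)]
    rw [hZeq, this] at hZ3
    exact hZ3
  -- main argument
  by_contra hcon
  push_neg at hcon
  have key : ∀ v ∈ C.erase e, v ∉ J.erase e → ¬ N.Indep (insert v (J.erase e)) := by
    intro v hv hvJe
    have hvC : v ∈ C := Finset.mem_of_mem_erase hv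
    have hvne : v ≠ e := Finset.ne_of_mem_erase hv
    have hvT : v ∈ T := by
      rcases Finset.mem_insert.mp (hCsub hvC) with h | h
      · exact absurd h hvne
      · exact h
    have hvJ : v ∉ J := fun hvJ => hvJe (Finset.mem_erase.mpr ⟨hvne, hvJ⟩)
    exact hcon v hvT hvJ (CT2 v hv)
  set G : Finset E := (J.erase e) ∪ (C.erase e) with hG
  have hJeG : J.erase e ⊆ G := Finset.subset_union_left
  have hJemax : ∀ x ∈ G, x ∉ J.erase e → ¬ N.Indep (insert x (J.erase e)) := by
    intro x hx hxJe
    rcases Finset.mem_union.mp hx with h | h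
    · exact absurd h hxJe
    · exact key x h hxJe
  have heG : e ∉ G := by
    simp [hG, Finset.mem_union, Finset.mem_erase]
  -- extend C.erase e to maximal in insert e G
  obtain ⟨Z, hZ1, hZ2, hZ3, hZ4⟩ := exists_maximal N (herase e heC)
    (Finset.subset_union_right.trans (Finset.subset_insert e G))
  have heZ : e ∉ Z := by
    intro heZ
    have : C ⊆ Z := by
      intro x hx
      by_cases hxe : x = e
      · exact hxe ▸ heZ
      · exact hZ1 (Finset.mem_erase.mpr ⟨hxe, hx⟩)
    exact hCdep (N.indep_subset hZ3 this)
  have hZG : Z ⊆ G := by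
    intro x hx
    rcases Finset.mem_insert.mp (hZ2 hx) with h | h
    · exact absurd (h ▸ hx) heZ
    · exact h
  have hZmaxG : ∀ x ∈ G, x ∉ Z → ¬ N.Indep (insert x Z) := fun x hx =>
    hZ4 x (Finset.mem_insert_of_mem hx)
  -- |Z| = |J.erase e| since both maximal in G
  have h1 : Z.card ≤ (J.erase e).card :=
    card_le_of_maximal N (N.indep_subset hJ (Finset.erase_subset e J)) hJeG hJemax hZ3 hZG
  -- J is an independent subset of insert e G, Z maximal there
  have hJsub : J ⊆ insert e G := by
    intro x hx
    by_cases hxe : x = e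
    · exact hxe ▸ Finset.mem_insert_self e G
    · exact Finset.mem_insert_of_mem (hJeG (Finset.mem_erase.mpr ⟨hxe, hx⟩))
  have h2 : J.card ≤ Z.card := card_le_of_maximal N hZ3 hZ2 hZ4 hJ hJsub
  have := Finset.card_erase_of_mem heJ
  have hposJ : 0 < J.card := Finset.card_pos.mpr ⟨e, heJ⟩
  omega

end Stmt10


namespace Stmt10

open Classical in
/-- pick a victim for matroid `N`: an element whose removal lets `e` in, while keeping
the invariant set `X` extendable by it. -/
noncomputable def vict {E : Type*} [Fintype E] [DecidableEq E]
    (N : FinMatroid E) (T X : Finset E) (e : E) : Option E :=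
  if h : ∃ u, u ∈ T ∧ u ∉ insert e X ∧ N.Indep (insert e (T.erase u)) ∧ N.Indep (insert u X)
  then some h.choose else none

variable {E : Type*} [Fintype E] [DecidableEq E]

lemma vict_some {N : FinMatroid E} {T X : Finset E} {e u : E}
    (h : vict N T X e = some u) :
    u ∈ T ∧ u ∉ insert e X ∧ N.Indep (insert e (T.erase u)) ∧ N.Indep (insert u X) := by
  rw [vict] at h
  split_ifs at h with hex
  cases h
  exact hex.choose_spec

lemma vict_none {N : FinMatroid E} {T X : Finset E} {e : E}
    (h : vict N T X e = none)
    (hex : ∃ u, u ∈ T ∧ u ∉ insert e X ∧ N.Indep (insert e (T.erase u)) ∧ N.Indep (insert u X)) :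
    False := by
  rw [vict] at h
  split_ifs at h with hex'


variable {k : ℕ} (M : Fin k → FinMatroid E) (S₁ : Finset E)

/-- all victims (one per matroid). -/
noncomputable def victs (T : Finset E) (D : Fin k → Finset E) (R : Finset E) (e : E) :
    Finset E :=
  Finset.univ.biUnion fun ℓ => (vict (M ℓ) T ((T ∩ S₁) ∪ D ℓ ∪ R) e).toFinset

lemma mem_victs {T : Finset E} {D : Fin k → Finset E} {R : Finset E} {e x : E} :
    x ∈ victs M S₁ T D R e ↔ ∃ ℓ, vict (M ℓ) T ((T ∩ S₁) ∪ D ℓ ∪ R) e = some x := by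
  simp [victs, Option.mem_toFinset, Option.mem_def]

/-- The adaptive exchange process. -/
noncomputable def proc (A : Finset E) : List E → Finset E → (Fin k → Finset E) → Finset E
  | [], T, _ => T
  | e :: rest, T, D =>
    if e ∈ A then
      proc A rest (insert e T \ victs M S₁ T D rest.toFinset e) D
    else
      proc A rest T
        (fun ℓ => D ℓ ∪ (vict (M ℓ) T ((T ∩ S₁) ∪ D ℓ ∪ rest.toFinset) e).toFinset)

lemma proc_nil (A T D) : proc M S₁ A [] T D = T := rfl

lemma proc_cons (A : Finset E) (e : E) (rest : List E) (T : Finset E) (D : Fin k → Finset E) :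
    proc M S₁ A (e :: rest) T D =
      if e ∈ A then
        proc M S₁ A rest (insert e T \ victs M S₁ T D rest.toFinset e) D
      else
        proc M S₁ A rest T
          (fun ℓ => D ℓ ∪ (vict (M ℓ) T ((T ∩ S₁) ∪ D ℓ ∪ rest.toFinset) e).toFinset) := rfl

/-- the process only reads coordinates of `A` along the list. -/
lemma proc_congr (A B : Finset E) : ∀ (rem : List E) (T : Finset E) (D : Fin k → Finset E),
    (∀ x ∈ rem, (x ∈ A ↔ x ∈ B)) → proc M S₁ A rem T D = proc M S₁ B rem T D := by
  intro rem
  induction rem with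
  | nil => intro T D _; rfl
  | cons e rest ih =>
      intro T D h
      rw [proc_cons, proc_cons]
      have he : e ∈ A ↔ e ∈ B := h e List.mem_cons_self
      by_cases heA : e ∈ A
      · rw [if_pos heA, if_pos (he.mp heA)]
        exact ih _ _ (fun x hx => h x (List.mem_cons_of_mem e hx))
      · rw [if_neg heA, if_neg (fun hb => heA (he.mpr hb))]
        exact ih _ _ (fun x hx => h x (List.mem_cons_of_mem e hx))

lemma proc_subset (A : Finset E) : ∀ (rem : List E) (T : Finset E) (D : Fin k → Finset E),
    proc M S₁ A rem T D ⊆ T ∪ rem.toFinset := by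
  intro rem
  induction rem with
  | nil => intro T D; simp [proc_nil]
  | cons e rest ih =>
      intro T D
      rw [proc_cons]
      by_cases heA : e ∈ A
      · rw [if_pos heA]
        refine (ih _ _).trans ?_
        intro x hx
        simp only [List.toFinset_cons, Finset.mem_union, Finset.mem_insert,
          Finset.mem_sdiff] at hx ⊢
        tauto
      · rw [if_neg heA]
        refine (ih _ _).trans ?_
        intro x hx
        simp only [List.toFinset_cons, Finset.mem_union, Finset.mem_insert] at hx ⊢
        tauto

end Stmt10


namespace Stmt10

variable {E : Type*} [Fintype E] [DecidableEq E] {k : ℕ}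
variable (M : Fin k → FinMatroid E) (S₁ S₂ : Finset E)

lemma proc_spec (A : Finset E) :
    ∀ (rem : List E) (T : Finset E) (D : Fin k → Finset E),
      rem.Nodup →
      (∀ x ∈ rem, x ∈ S₁ ∧ x ∉ S₂) →
      (∀ ℓ, (M ℓ).Indep T) →
      (∀ ℓ, (M ℓ).Indep ((T ∩ S₁) ∪ D ℓ ∪ rem.toFinset)) →
      (T ⊆ ((S₁ ∩ A) \ rem.toFinset) ∪ S₂) →
      (∀ ℓ x, x ∈ D ℓ → x ∉ S₁) →
      (((S₁ \ S₂) ∩ A) \ rem.toFinset ⊆ T) →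
      (∀ ℓ, (M ℓ).Indep (proc M S₁ A rem T D)) ∧
      T ∩ S₁ ⊆ proc M S₁ A rem T D ∧
      proc M S₁ A rem T D ⊆ (S₁ ∩ A) ∪ S₂ ∧
      (S₁ \ S₂) ∩ A ⊆ proc M S₁ A rem T D := by
  intro rem
  induction rem with
  | nil =>
      intro T D _ _ H1 _ H3 _ H5
      simp only [proc_nil, List.toFinset_nil, Finset.sdiff_empty] at *
      exact ⟨H1, Finset.inter_subset_left, H3, H5⟩
  | cons e rest ih =>
      intro T D hnodup hmem H1 H2 H3 H4 H5
      obtain ⟨heS₁, heS₂⟩ := hmem e List.mem_cons_self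
      have henr : e ∉ rest := (List.nodup_cons.mp hnodup).1
      have hnodup' : rest.Nodup := (List.nodup_cons.mp hnodup).2
      have hmem' : ∀ x ∈ rest, x ∈ S₁ ∧ x ∉ S₂ :=
        fun x hx => hmem x (List.mem_cons_of_mem e hx)
      have heT : e ∉ T := by
        intro h
        rcases Finset.mem_union.mp (H3 h) with h' | h'
        · exact (Finset.mem_sdiff.mp h').2 (by
            simp [List.toFinset_cons])
        · exact heS₂ h'
      set X : Fin k → Finset E := fun ℓ => (T ∩ S₁) ∪ D ℓ ∪ rest.toFinset with hX
      have hXe : ∀ ℓ, (T ∩ S₁) ∪ D ℓ ∪ (e :: rest).toFinset = insert e (X ℓ) := by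
        intro ℓ
        rw [hX]
        simp only [List.toFinset_cons, Finset.union_insert]
      have heX : ∀ ℓ, e ∉ X ℓ := by
        intro ℓ hmm
        simp only [hX, Finset.mem_union, Finset.mem_inter, List.mem_toFinset] at hmm
        rcases hmm with (h | h) | h
        · exact heT h.1
        · exact H4 ℓ e h heS₁
        · exact henr h
      have H2' : ∀ ℓ, (M ℓ).Indep (insert e (X ℓ)) := by
        intro ℓ
        have := H2 ℓ
        rwa [hXe ℓ] at this
      have dich : ∀ ℓ, vict (M ℓ) T (X ℓ) e = none → (M ℓ).Indep (insert e T) := by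
        intro ℓ hnone
        by_contra hdep
        refine vict_none hnone ?_
        obtain ⟨v, hv1, hv2, hv3, hv4⟩ :=
          exists_victim (M ℓ) (H1 ℓ) (H2' ℓ) (Finset.mem_insert_self e (X ℓ)) heT hdep
        rw [Finset.erase_insert (heX ℓ)] at hv4
        exact ⟨v, hv1, hv2, hv3, hv4⟩
      have hvfact : ∀ x ∈ victs M S₁ T D rest.toFinset e, x ∈ T ∧ x ∉ S₁ := by
        intro x hx
        obtain ⟨ℓ, hℓ⟩ := (mem_victs M S₁).mp hx
        obtain ⟨h1, h2, _, _⟩ := vict_some hℓ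
        refine ⟨h1, fun hxS₁ => h2 ?_⟩
        exact Finset.mem_insert_of_mem (Finset.mem_union_left _
          (Finset.mem_union_left _ (Finset.mem_inter.mpr ⟨h1, hxS₁⟩)))
      by_cases heA : e ∈ A
      · -- arrival
        rw [proc_cons, if_pos heA]
        set T' : Finset E := insert e T \ victs M S₁ T D rest.toFinset e with hT'
        have hT'indep : ∀ ℓ, (M ℓ).Indep T' := by
          intro ℓ
          rcases hv : vict (M ℓ) T (X ℓ) e with _ | u
          · refine (M ℓ).indep_subset (dich ℓ hv) ?_
            exact (Finset.sdiff_subset).trans Finset.Subset.rfl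
          · obtain ⟨hu1, _, hu3, _⟩ := vict_some hv
            refine (M ℓ).indep_subset hu3 ?_
            intro x hx
            obtain ⟨hx1, hx2⟩ := Finset.mem_sdiff.mp hx
            have hxu : x ≠ u := by
              intro h
              exact hx2 (h ▸ (mem_victs M S₁).mpr ⟨ℓ, hv⟩)
            rcases Finset.mem_insert.mp hx1 with h | h
            · subst h; exact Finset.mem_insert_self _ _
            · exact Finset.mem_insert_of_mem (Finset.mem_erase.mpr ⟨hxu, h⟩)
        have hTT' : T ∩ S₁ ⊆ T' := by
          intro x hx
          obtain ⟨hx1, hx2⟩ := Finset.mem_inter.mp hx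
          refine Finset.mem_sdiff.mpr ⟨Finset.mem_insert_of_mem hx1, fun h => ?_⟩
          exact (hvfact x h).2 hx2
        have heT' : e ∈ T' := by
          refine Finset.mem_sdiff.mpr ⟨Finset.mem_insert_self e T, fun h => ?_⟩
          exact heT (hvfact e h).1
        have H2'' : ∀ ℓ, (M ℓ).Indep ((T' ∩ S₁) ∪ D ℓ ∪ rest.toFinset) := by
          intro ℓ
          refine (M ℓ).indep_subset (H2' ℓ) ?_
          intro x hx
          rcases Finset.mem_union.mp hx with hx' | hx'
          · rcases Finset.mem_union.mp hx' with hx'' | hx''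
            · obtain ⟨hx1, hx2⟩ := Finset.mem_inter.mp hx''
              have := (Finset.mem_sdiff.mp hx1).1
              rcases Finset.mem_insert.mp this with h | h
              · subst h; exact Finset.mem_insert_self _ _
              · exact Finset.mem_insert_of_mem (Finset.mem_union_left _
                  (Finset.mem_union_left _ (Finset.mem_inter.mpr ⟨h, hx2⟩)))
            · exact Finset.mem_insert_of_mem (Finset.mem_union_left _
                (Finset.mem_union_right _ hx''))
          · exact Finset.mem_insert_of_mem (Finset.mem_union_right _ hx')
        have H3'' : T' ⊆ ((S₁ ∩ A) \ rest.toFinset) ∪ S₂ := by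
          intro x hx
          obtain ⟨hx1, _⟩ := Finset.mem_sdiff.mp hx
          rcases Finset.mem_insert.mp hx1 with h | h
          · subst h
            exact Finset.mem_union_left _ (Finset.mem_sdiff.mpr
              ⟨Finset.mem_inter.mpr ⟨heS₁, heA⟩, by simpa using henr⟩)
          · rcases Finset.mem_union.mp (H3 h) with h' | h'
            · obtain ⟨h1, h2⟩ := Finset.mem_sdiff.mp h'
              refine Finset.mem_union_left _ (Finset.mem_sdiff.mpr ⟨h1, fun hr => h2 ?_⟩)
              simp only [List.toFinset_cons]
              exact Finset.mem_insert_of_mem hr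
            · exact Finset.mem_union_right _ h'
        have H5'' : ((S₁ \ S₂) ∩ A) \ rest.toFinset ⊆ T' := by
          intro x hx
          obtain ⟨hx1, hx2⟩ := Finset.mem_sdiff.mp hx
          by_cases hxe : x = e
          · exact hxe ▸ heT'
          · have hxT : x ∈ T := by
              refine H5 (Finset.mem_sdiff.mpr ⟨hx1, fun h => ?_⟩)
              simp only [List.toFinset_cons, Finset.mem_insert] at h
              rcases h with h | h
              · exact hxe h
              · exact hx2 h
            refine Finset.mem_sdiff.mpr ⟨Finset.mem_insert_of_mem hxT, fun h => ?_⟩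
            exact (hvfact x h).2 (Finset.mem_sdiff.mp (Finset.mem_inter.mp hx1).1).1
        obtain ⟨c1, c2, c3, c4⟩ := ih T' D hnodup' hmem' hT'indep H2'' H3'' H4 H5''
        exact ⟨c1, fun x hx => c2 (Finset.mem_inter.mpr
          ⟨hTT' hx, (Finset.mem_inter.mp hx).2⟩), c3, c4⟩
      · -- no-show
        rw [proc_cons, if_neg heA]
        set D' : Fin k → Finset E :=
          fun ℓ => D ℓ ∪ (vict (M ℓ) T ((T ∩ S₁) ∪ D ℓ ∪ rest.toFinset) e).toFinset with hD'
        have H2'' : ∀ ℓ, (M ℓ).Indep ((T ∩ S₁) ∪ D' ℓ ∪ rest.toFinset) := by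
          intro ℓ
          have hDeq : D' ℓ = D ℓ ∪ (vict (M ℓ) T (X ℓ) e).toFinset := rfl
          rcases hv : vict (M ℓ) T (X ℓ) e with _ | u
          · refine (M ℓ).indep_subset (H2' ℓ) ?_
            rw [hDeq, hv]
            simp only [Option.toFinset_none, Finset.union_empty]
            exact Finset.subset_insert e (X ℓ)
          · obtain ⟨_, _, _, hu4⟩ := vict_some hv
            refine (M ℓ).indep_subset hu4 ?_
            rw [hDeq, hv]
            simp only [Option.toFinset_some]
            intro x hx
            simp only [hX, Finset.mem_union, Finset.mem_singleton,
              Finset.mem_insert] at hx ⊢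
            tauto
        have H3'' : T ⊆ ((S₁ ∩ A) \ rest.toFinset) ∪ S₂ := by
          intro x hx
          rcases Finset.mem_union.mp (H3 hx) with h | h
          · obtain ⟨h1, h2⟩ := Finset.mem_sdiff.mp h
            refine Finset.mem_union_left _ (Finset.mem_sdiff.mpr ⟨h1, fun hr => h2 ?_⟩)
            simp only [List.toFinset_cons]
            exact Finset.mem_insert_of_mem hr
          · exact Finset.mem_union_right _ h
        have H4'' : ∀ ℓ x, x ∈ D' ℓ → x ∉ S₁ := by
          intro ℓ x hx
          have hDeq : D' ℓ = D ℓ ∪ (vict (M ℓ) T (X ℓ) e).toFinset := rfl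
          rw [hDeq] at hx
          rcases Finset.mem_union.mp hx with h | h
          · exact H4 ℓ x h
          · rcases hv : vict (M ℓ) T (X ℓ) e with _ | u
            · rw [hv] at h; simp at h
            · rw [hv] at h
              simp only [Option.toFinset_some, Finset.mem_singleton] at h
              subst h
              obtain ⟨hu1, hu2, _, _⟩ := vict_some hv
              intro hxS₁
              exact hu2 (Finset.mem_insert_of_mem (Finset.mem_union_left _
                (Finset.mem_union_left _ (Finset.mem_inter.mpr ⟨hu1, hxS₁⟩))))
        have H5'' : ((S₁ \ S₂) ∩ A) \ rest.toFinset ⊆ T := by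
          intro x hx
          obtain ⟨hx1, hx2⟩ := Finset.mem_sdiff.mp hx
          have hxe : x ≠ e := by
            intro h
            exact heA (h ▸ (Finset.mem_inter.mp hx1).2)
          refine H5 (Finset.mem_sdiff.mpr ⟨hx1, fun h => ?_⟩)
          simp only [List.toFinset_cons, Finset.mem_insert] at h
          rcases h with h | h
          · exact hxe h
          · exact hx2 h
        obtain ⟨c1, c2, c3, c4⟩ := ih T D' hnodup' hmem' H1 H2'' H3'' H4'' H5''
        exact ⟨c1, c2, c3, c4⟩

end Stmt10


namespace Stmt10

variable {E : Type*} [Fintype E] [DecidableEq E]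

lemma sum_prodWeight (π : E → ℝ) : ∑ A : Finset E, prodWeight π A = 1 := by
  have h := Finset.prod_add π (fun i => 1 - π i) (Finset.univ : Finset E)
  simp only [Finset.powerset_univ] at h
  have h1 : ∏ i ∈ (Finset.univ : Finset E), (π i + (1 - π i)) = 1 := by
    simp
  rw [h1] at h
  conv_rhs => rw [h]
  apply Finset.sum_congr rfl
  intro t _
  rw [prodWeight, Finset.compl_eq_univ_sdiff]

lemma expec_const (π : E → ℝ) (c : ℝ) : expec π (fun _ => c) = c := by
  rw [expec, ← Finset.sum_mul, sum_prodWeight, one_mul]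

lemma sum_split (π : E → ℝ) (e : E) (g : Finset E → ℝ)
    (hg : ∀ A, g (insert e A) = g A) :
    (∑ A ∈ Finset.univ.filter (fun A : Finset E => e ∈ A), prodWeight π A * g A)
      = π e * expec π g ∧
    (∑ A ∈ Finset.univ.filter (fun A : Finset E => e ∉ A), prodWeight π A * g A)
      = (1 - π e) * expec π g := by
  classical
  set u : Finset E → ℝ := fun B => (∏ x ∈ B, π x) * ∏ x ∈ Bᶜ.erase e, (1 - π x) with hu
  have key1 : ∀ B : Finset E, e ∉ B → prodWeight π B = (1 - π e) * u B := by
    intro B hB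
    have heBc : e ∈ Bᶜ := Finset.mem_compl.mpr hB
    rw [prodWeight, hu, ← Finset.mul_prod_erase Bᶜ _ heBc]
    ring
  have key2 : ∀ B : Finset E, e ∉ B → prodWeight π (insert e B) = π e * u B := by
    intro B hB
    rw [prodWeight, hu, Finset.prod_insert hB, Finset.compl_insert]
    ring
  have reindex : ∀ (F : Finset E → ℝ),
      ∑ A ∈ Finset.univ.filter (fun A : Finset E => e ∈ A), F A
        = ∑ B ∈ Finset.univ.filter (fun B : Finset E => e ∉ B), F (insert e B) := by
    intro F
    apply Finset.sum_nbij' (i := fun A => A.erase e) (j := fun B => insert e B)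
    · intro A hA
      simp only [Finset.mem_filter, Finset.mem_univ, true_and] at hA ⊢
      simp [Finset.mem_erase]
    · intro B hB
      simp only [Finset.mem_filter, Finset.mem_univ, true_and] at hB ⊢
      exact Finset.mem_insert_self e B
    · intro A hA
      simp only [Finset.mem_filter, Finset.mem_univ, true_and] at hA
      exact Finset.insert_erase hA
    · intro B hB
      simp only [Finset.mem_filter, Finset.mem_univ, true_and] at hB
      exact Finset.erase_insert hB
    · intro A hA
      simp only [Finset.mem_filter, Finset.mem_univ, true_and] at hA
      rw [Finset.insert_erase hA]
  have Ein : ∑ A ∈ Finset.univ.filter (fun A : Finset E => e ∈ A), prodWeight π A * g A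
      = π e * ∑ B ∈ Finset.univ.filter (fun B : Finset E => e ∉ B), u B * g B := by
    rw [reindex (fun A => prodWeight π A * g A), Finset.mul_sum]
    apply Finset.sum_congr rfl
    intro B hB
    simp only [Finset.mem_filter, Finset.mem_univ, true_and] at hB
    rw [key2 B hB, hg B]
    ring
  have Eout : ∑ A ∈ Finset.univ.filter (fun A : Finset E => e ∉ A), prodWeight π A * g A
      = (1 - π e) * ∑ B ∈ Finset.univ.filter (fun B : Finset E => e ∉ B), u B * g B := by
    rw [Finset.mul_sum]
    apply Finset.sum_congr rfl
    intro B hB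
    simp only [Finset.mem_filter, Finset.mem_univ, true_and] at hB
    rw [key1 B hB]
    ring
  have hexp : expec π g
      = ∑ B ∈ Finset.univ.filter (fun B : Finset E => e ∉ B), u B * g B := by
    rw [expec, ← Finset.sum_filter_add_sum_filter_not Finset.univ (fun A : Finset E => e ∈ A),
      Ein, Eout]
    ring
  rw [hexp]
  exact ⟨Ein, Eout⟩

lemma expec_split (π : E → ℝ) (e : E) (h h₁ h₂ : Finset E → ℝ)
    (H : ∀ A, h A = if e ∈ A then h₁ A else h₂ A)
    (hg1 : ∀ A, h₁ (insert e A) = h₁ A) (hg2 : ∀ A, h₂ (insert e A) = h₂ A) :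
    expec π h = π e * expec π h₁ + (1 - π e) * expec π h₂ := by
  classical
  rw [expec, ← Finset.sum_filter_add_sum_filter_not Finset.univ (fun A : Finset E => e ∈ A)]
  have e1 : ∑ A ∈ Finset.univ.filter (fun A : Finset E => e ∈ A), prodWeight π A * h A
      = ∑ A ∈ Finset.univ.filter (fun A : Finset E => e ∈ A), prodWeight π A * h₁ A := by
    apply Finset.sum_congr rfl
    intro A hA
    simp only [Finset.mem_filter, Finset.mem_univ, true_and] at hA
    rw [H A, if_pos hA]
  have e2 : ∑ A ∈ Finset.univ.filter (fun A : Finset E => e ∉ A), prodWeight π A * h A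
      = ∑ A ∈ Finset.univ.filter (fun A : Finset E => e ∉ A), prodWeight π A * h₂ A := by
    apply Finset.sum_congr rfl
    intro A hA
    simp only [Finset.mem_filter, Finset.mem_univ, true_and] at hA
    rw [H A, if_neg hA]
  rw [e1, e2, (sum_split π e h₁ hg1).1, (sum_split π e h₂ hg2).2]

lemma expec_boole (π : E → ℝ) (e : E) :
    expec π (fun A => if e ∈ A then (1 : ℝ) else 0) = π e := by
  have := expec_split π e (fun A => if e ∈ A then (1 : ℝ) else 0)
    (fun _ => 1) (fun _ => 0) (fun A => rfl) (fun A => rfl) (fun A => rfl)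
  rw [this, expec_const, expec_const]
  ring

end Stmt10


namespace Stmt10

variable {E : Type*} [Fintype E] [DecidableEq E] {k : ℕ}
variable (M : Fin k → FinMatroid E) (S₁ : Finset E)

lemma proc_prob (p : ℝ) (hp0 : 0 ≤ p) (hp1 : p ≤ 1) (f : E) (hfS₁ : f ∉ S₁) :
    ∀ (rem : List E) (T : Finset E) (D : Fin k → Finset E),
      rem.Nodup → (∀ x ∈ rem, x ∈ S₁) → f ∈ T →
      (1 - p) ^ (k - (Finset.univ.filter (fun ℓ => f ∈ D ℓ)).card)
        ≤ expec (fun _ => p) (fun A => if f ∈ proc M S₁ A rem T D then (1 : ℝ) else 0) := by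
  intro rem
  induction rem with
  | nil =>
      intro T D _ _ hfT
      have hfun : (fun A : Finset E => if f ∈ proc M S₁ A [] T D then (1 : ℝ) else 0)
          = fun _ => (1 : ℝ) := by
        funext A
        show (if f ∈ proc M S₁ A [] T D then (1 : ℝ) else 0) = 1
        rw [proc_nil, if_pos hfT]
      rw [hfun, expec_const]
      exact pow_le_one₀ (by linarith) (by linarith)
  | cons e rest ih =>
      intro T D hnodup hmem hfT
      have henr : e ∉ rest := (List.nodup_cons.mp hnodup).1
      have hnodup' : rest.Nodup := (List.nodup_cons.mp hnodup).2
      have hmem' : ∀ x ∈ rest, x ∈ S₁ := fun x hx => hmem x (List.mem_cons_of_mem e hx)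
      have heS₁ : e ∈ S₁ := hmem e List.mem_cons_self
      have hfe : f ≠ e := fun h => hfS₁ (h ▸ heS₁)
      set T' : Finset E := insert e T \ victs M S₁ T D rest.toFinset e with hT'
      set D' : Fin k → Finset E :=
        fun ℓ => D ℓ ∪ (vict (M ℓ) T ((T ∩ S₁) ∪ D ℓ ∪ rest.toFinset) e).toFinset with hD'
      have hins : ∀ (T₀ : Finset E) (D₀ : Fin k → Finset E) (A : Finset E),
          proc M S₁ (insert e A) rest T₀ D₀ = proc M S₁ A rest T₀ D₀ := by
        intro T₀ D₀ A
        apply proc_congr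
        intro x hx
        have hxe : x ≠ e := fun h => henr (h ▸ hx)
        simp [Finset.mem_insert, hxe]
      have hsplit : expec (fun _ => p)
            (fun A => if f ∈ proc M S₁ A (e :: rest) T D then (1 : ℝ) else 0)
          = p * expec (fun _ => p) (fun A => if f ∈ proc M S₁ A rest T' D then (1 : ℝ) else 0)
            + (1 - p) * expec (fun _ => p)
                (fun A => if f ∈ proc M S₁ A rest T D' then (1 : ℝ) else 0) := by
        have := expec_split (fun _ => p) e
          (fun A => if f ∈ proc M S₁ A (e :: rest) T D then (1 : ℝ) else 0)
          (fun A => if f ∈ proc M S₁ A rest T' D then (1 : ℝ) else 0)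
          (fun A => if f ∈ proc M S₁ A rest T D' then (1 : ℝ) else 0)
          (fun A => by
            show (if f ∈ proc M S₁ A (e :: rest) T D then (1 : ℝ) else 0) = _
            by_cases he : e ∈ A
            · rw [proc_cons, if_pos he, ← hT']
              simp [he]
            · rw [proc_cons, if_neg he, ← hD']
              simp [he])
          (fun A => by simp only [hins])
          (fun A => by simp only [hins])
        exact this
      set c : ℕ := (Finset.univ.filter (fun ℓ => f ∈ D ℓ)).card with hc
      rw [hsplit]
      by_cases hdes : ∃ ℓ, vict (M ℓ) T ((T ∩ S₁) ∪ D ℓ ∪ rest.toFinset) e = some f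
      · obtain ⟨ℓ₀, hℓ₀⟩ := hdes
        obtain ⟨hf1, hf2, _, _⟩ := vict_some hℓ₀
        have hfD : f ∉ D ℓ₀ := fun h => hf2 (Finset.mem_insert_of_mem
          (Finset.mem_union_left _ (Finset.mem_union_right _ h)))
        have hfV : f ∈ victs M S₁ T D rest.toFinset e := (mem_victs M S₁).mpr ⟨ℓ₀, hℓ₀⟩
        have hfT' : f ∉ T' := by
          rw [hT']
          intro h
          exact (Finset.mem_sdiff.mp h).2 hfV
        have h₁0 : expec (fun _ => p)
            (fun A => if f ∈ proc M S₁ A rest T' D then (1 : ℝ) else 0) = 0 := by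
          have hfun : (fun A : Finset E => if f ∈ proc M S₁ A rest T' D then (1 : ℝ) else 0)
              = fun _ => (0 : ℝ) := by
            funext A
            show (if f ∈ proc M S₁ A rest T' D then (1 : ℝ) else 0) = 0
            rw [if_neg]
            intro hmem''
            rcases Finset.mem_union.mp (proc_subset M S₁ A rest T' D hmem'') with h | h
            · exact hfT' h
            · exact hfS₁ (hmem' f (List.mem_toFinset.mp h))
          rw [hfun, expec_const]
        have hfD' : f ∈ D' ℓ₀ := by
          refine Finset.mem_union_right _ ?_
          rw [Option.mem_toFinset, hℓ₀]
          rfl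
        have hmemD : ℓ₀ ∈ Finset.univ.filter (fun ℓ => f ∈ D' ℓ) := by
          simp only [Finset.mem_filter, Finset.mem_univ, true_and]
          exact hfD'
        have hnmemD : ℓ₀ ∉ Finset.univ.filter (fun ℓ => f ∈ D ℓ) := by
          simp only [Finset.mem_filter, Finset.mem_univ, true_and]
          exact hfD
        have hck : c < k := by
          have h1 : Finset.univ.filter (fun ℓ => f ∈ D ℓ) ⊂ Finset.univ :=
            (Finset.ssubset_iff_of_subset (Finset.subset_univ _)).mpr
              ⟨ℓ₀, Finset.mem_univ _, hnmemD⟩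
          have := Finset.card_lt_card h1
          simpa [Finset.card_univ] using this
        have hsubset : Finset.univ.filter (fun ℓ => f ∈ D ℓ)
            ⊆ Finset.univ.filter (fun ℓ => f ∈ D' ℓ) := by
          intro ℓ hℓ
          simp only [Finset.mem_filter, Finset.mem_univ, true_and] at hℓ ⊢
          exact Finset.mem_union_left _ hℓ
        have hss : Finset.univ.filter (fun ℓ => f ∈ D ℓ)
            ⊂ Finset.univ.filter (fun ℓ => f ∈ D' ℓ) :=
          (Finset.ssubset_iff_of_subset hsubset).mpr ⟨ℓ₀, hmemD, hnmemD⟩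
        have hc' : c + 1 ≤ (Finset.univ.filter (fun ℓ => f ∈ D' ℓ)).card := by
          have := Finset.card_lt_card hss
          omega
        have hq0 : (0 : ℝ) ≤ 1 - p := by linarith
        have hq1 : 1 - p ≤ 1 := by linarith
        have ih₂ := ih T D' hnodup' hmem' hfT
        have hmono : (1 - p) ^ (k - c - 1)
            ≤ (1 - p) ^ (k - (Finset.univ.filter (fun ℓ => f ∈ D' ℓ)).card) := by
          apply pow_le_pow_of_le_one hq0 hq1
          omega
        calc (1 - p) ^ (k - c)
            = (1 - p) * (1 - p) ^ (k - c - 1) := by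
              rw [← pow_succ']
              congr 1
              omega
          _ ≤ (1 - p) * expec (fun _ => p)
                (fun A => if f ∈ proc M S₁ A rest T D' then (1 : ℝ) else 0) :=
              mul_le_mul_of_nonneg_left (le_trans hmono ih₂) hq0
          _ = p * expec (fun _ => p)
                (fun A => if f ∈ proc M S₁ A rest T' D then (1 : ℝ) else 0)
              + (1 - p) * expec (fun _ => p)
                (fun A => if f ∈ proc M S₁ A rest T D' then (1 : ℝ) else 0) := by
              rw [h₁0]
              ring
      · push_neg at hdes
        have hfT'' : f ∈ T' := by
          rw [hT']
          refine Finset.mem_sdiff.mpr ⟨Finset.mem_insert_of_mem hfT, fun h => ?_⟩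
          obtain ⟨ℓ, hℓ⟩ := (mem_victs M S₁).mp h
          exact hdes ℓ hℓ
        have hcD' : (Finset.univ.filter (fun ℓ => f ∈ D' ℓ)).card = c := by
          rw [hc]
          congr 1
          apply Finset.filter_congr
          intro ℓ _
          simp only [hD', Finset.mem_union, Option.mem_toFinset]
          constructor
          · intro h
            rcases h with h | h
            · exact h
            · exact absurd h (hdes ℓ)
          · exact fun h => Or.inl h
        have ih₁ := ih T' D hnodup' hmem' hfT''
        have ih₂ := ih T D' hnodup' hmem' hfT
        rw [hcD'] at ih₂
        have hq0 : (0 : ℝ) ≤ 1 - p := by linarith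
        calc (1 - p) ^ (k - c)
            = p * (1 - p) ^ (k - c) + (1 - p) * (1 - p) ^ (k - c) := by ring
          _ ≤ p * expec (fun _ => p)
                (fun A => if f ∈ proc M S₁ A rest T' D then (1 : ℝ) else 0)
              + (1 - p) * expec (fun _ => p)
                (fun A => if f ∈ proc M S₁ A rest T D' then (1 : ℝ) else 0) :=
              add_le_add (mul_le_mul_of_nonneg_left ih₁ hp0)
                (mul_le_mul_of_nonneg_left ih₂ hq0)

end Stmt10


/-- Exchange map for the intersection of `k` matroids: given sets
`S₁, S₂` independent in every `M_ℓ`, there is a deterministic map `T` on realizations of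
the random set `R` such that always `S₁ ∩ S₂ ⊆ T(R)`, `T(R)` is independent in every
matroid, `T(R) ⊆ (S₁ ∩ R) ∪ S₂`, and `(S₁ ∖ S₂) ∩ R ⊆ T(R)` (hence `Pr[e ∈ T(R)] = p`
for `e ∈ S₁ ∖ S₂`), while `Pr[f ∈ T(R)] ≥ (1 − p)^k` for every `f ∈ S₂ ∖ S₁`. -/
theorem stmt_10 (k : ℕ) (hk : 0 < k) (M : Fin k → FinMatroid E)
    (S₁ S₂ : Finset E)
    (h1 : ∀ ℓ, (M ℓ).Indep S₁) (h2 : ∀ ℓ, (M ℓ).Indep S₂)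
    (p : ℝ) (hp0 : 0 ≤ p) (hp1 : p ≤ 1) :
    ∃ T : Finset E → Finset E,
      (∀ A, S₁ ∩ S₂ ⊆ T A) ∧
      (∀ A, ∀ ℓ, (M ℓ).Indep (T A)) ∧
      (∀ A, T A ⊆ (S₁ ∩ A) ∪ S₂) ∧
      (∀ A, (S₁ \ S₂) ∩ A ⊆ T A) ∧
      (∀ e ∈ S₁ \ S₂,
        expec (fun _ => p) (fun A => if e ∈ T A then 1 else 0) = p) ∧
      (∀ f ∈ S₂ \ S₁,
        (1 - p) ^ k ≤ expec (fun _ => p) (fun A => if f ∈ T A then 1 else 0)) := by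
  classical
  set L : List E := (S₁ \ S₂).toList with hL
  have hLnodup : L.Nodup := Finset.nodup_toList _
  have hLfin : L.toFinset = S₁ \ S₂ := Finset.toList_toFinset _
  have hLmem : ∀ x ∈ L, x ∈ S₁ ∧ x ∉ S₂ := by
    intro x hx
    have hx' : x ∈ S₁ \ S₂ := Finset.mem_toList.mp hx
    exact ⟨(Finset.mem_sdiff.mp hx').1, (Finset.mem_sdiff.mp hx').2⟩
  have hLmem' : ∀ x ∈ L, x ∈ S₁ := fun x hx => (hLmem x hx).1
  have spec : ∀ A, (∀ ℓ, (M ℓ).Indep (Stmt10.proc M S₁ A L S₂ (fun _ => ∅))) ∧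
      S₂ ∩ S₁ ⊆ Stmt10.proc M S₁ A L S₂ (fun _ => ∅) ∧
      Stmt10.proc M S₁ A L S₂ (fun _ => ∅) ⊆ (S₁ ∩ A) ∪ S₂ ∧
      (S₁ \ S₂) ∩ A ⊆ Stmt10.proc M S₁ A L S₂ (fun _ => ∅) := by
    intro A
    refine Stmt10.proc_spec M S₁ S₂ A L S₂ (fun _ => ∅) hLnodup hLmem h2 ?_ ?_ ?_ ?_
    · intro ℓ
      have hset : (S₂ ∩ S₁) ∪ (∅ : Finset E) ∪ L.toFinset = S₁ := by
        rw [hLfin]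
        ext x
        simp only [Finset.mem_union, Finset.mem_inter, Finset.mem_sdiff,
          Finset.notMem_empty, or_false]
        tauto
      show (M ℓ).Indep ((S₂ ∩ S₁) ∪ (∅ : Finset E) ∪ L.toFinset)
      rw [hset]
      exact h1 ℓ
    · exact Finset.subset_union_right
    · intro ℓ x hx
      simp at hx
    · intro x hx
      rw [hLfin] at hx
      obtain ⟨hx1, hx2⟩ := Finset.mem_sdiff.mp hx
      exact absurd (Finset.mem_inter.mp hx1).1 hx2
  refine ⟨fun A => Stmt10.proc M S₁ A L S₂ (fun _ => ∅), ?_, ?_, ?_, ?_, ?_, ?_⟩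
  · intro A x hx
    refine (spec A).2.1 ?_
    rw [Finset.inter_comm]
    exact hx
  · intro A ℓ
    exact (spec A).1 ℓ
  · intro A
    exact (spec A).2.2.1
  · intro A
    exact (spec A).2.2.2
  · intro e he
    have heS₁ : e ∈ S₁ := (Finset.mem_sdiff.mp he).1
    have heS₂ : e ∉ S₂ := (Finset.mem_sdiff.mp he).2
    have hiff : ∀ A, e ∈ Stmt10.proc M S₁ A L S₂ (fun _ => ∅) ↔ e ∈ A := by
      intro A
      constructor
      · intro h
        rcases Finset.mem_union.mp ((spec A).2.2.1 h) with h' | h'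
        · exact (Finset.mem_inter.mp h').2
        · exact absurd h' heS₂
      · intro h
        exact (spec A).2.2.2 (Finset.mem_inter.mpr ⟨he, h⟩)
    have hfun : (fun A => if e ∈ Stmt10.proc M S₁ A L S₂ (fun _ => ∅) then (1 : ℝ) else 0)
        = fun A => if e ∈ A then (1 : ℝ) else 0 := by
      funext A
      by_cases h : e ∈ A
      · rw [if_pos ((hiff A).mpr h), if_pos h]
      · rw [if_neg (fun h' => h ((hiff A).mp h')), if_neg h]
    rw [hfun]
    exact Stmt10.expec_boole (fun _ => p) e
  · intro f hf
    have hfS₁ : f ∉ S₁ := (Finset.mem_sdiff.mp hf).2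
    have hfS₂ : f ∈ S₂ := (Finset.mem_sdiff.mp hf).1
    have := Stmt10.proc_prob M S₁ p hp0 hp1 f hfS₁ L S₂ (fun _ => ∅) hLnodup hLmem' hfS₂
    have h0 : (Finset.univ.filter
        (fun ℓ : Fin k => f ∈ ((fun _ => (∅ : Finset E)) ℓ))).card = 0 := by
      simp
    rw [h0, Nat.sub_zero] at this
    exact this
end
end
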